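/- arXiv:1901.08320 — 6 statements merged into one kernel-verified Lean document; each statement's English description precedes it below -/
import Mathlib

section
/- Let F = a x^r y^{s+α} + b x^{r+α} y^s with a,b ∈ ℂ nonzero, 0 ≤ r ≤ s, α ≥ 1, and suppose s ≥ r + α. Then the Waring rank of F equals s + 1. -/
open MvPolynomial

noncomputable def lin (c : ℂ × ℂ) : MvPolynomial (Fin 2) ℂ :=
  C c.1 * X 0 + C c.2 * X 1

noncomputable def waringRank (d : ℕ) (F : MvPolynomial (Fin 2) ℂ) : ℕ :=
  sInf {r | ∃ (a : Fin r → ℂ) (c : Fin r → ℂ × ℂ), F = ∑ i, C (a i) * lin (c i) ^ d}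

/-!
Write `d = r + s + α`. If `F = ∑ A i * (u i * x + v i * y) ^ d`, the coefficient of
`x ^ m * y ^ (d - m)` is `d.choose m * ∑ A i * u i ^ m * v i ^ (d - m)`.

Lower bound: with `k ≤ s` summands these normalized coefficients vanish at the `k` positions
`r + α + 1, …, r + α + k ≤ d`. Applying `g ↦ u i * g - v i * (shifted g)` removes the `i`-th
summand, so induction on the summands forces them to vanish at `r + α` as well, contradicting
`b ≠ 0`.

Upper bound (Sylvester): the normalized coefficients of `F`, read as a sequence in the exponent
of `y`, satisfy the linear recurrence of a monic polynomial `p` of degree `s + 1` as soon as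
`p * (X ^ α - ρ)` has no monomial of degree in `[s + 1 - r, s + α]`, for the ratio `ρ` fixed by
`a` and `b`. Truncating the geometric series of `X ^ (s + 1 + α) / (X ^ α - ρ)` and adding a
generic constant gives such a `p` that is also separable. A sequence satisfying the recurrence of
`p` is then a combination `∑ λ i * t i ^ e` of the powers of the `s + 1` roots of `p`, which is
the decomposition `F = ∑ λ i * (x + t i * y) ^ d`.
-/

open Finset

namespace Polynomial

variable {K : Type*} [Field K] [IsAlgClosed K]

theorem exists_separable_add_C {P : K[X]} (hP : derivative P ≠ 0) :
    ∃ γ : K, (P + C γ).Separable := by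
  classical
  obtain ⟨γ, hγ⟩ := Infinite.exists_notMem_finset ((derivative P).roots.toFinset.image
    fun z => -P.eval z)
  refine ⟨γ, ?_⟩
  rw [Separable, derivative_add, derivative_C, add_zero,
    isCoprime_iff_aeval_ne_zero_of_isAlgClosed K K]
  intro z
  by_contra! hz
  simp only [coe_aeval_eq_eval, eval_add, eval_C] at hz
  exact hγ (mem_image.2 ⟨z, by simp [hP, hz.2], by linear_combination -hz.1⟩)

theorem exists_injective_isRoot {p : K[X]} (hp : p.Separable) {n : ℕ} (hn : p.natDegree = n) :
    ∃ t : Fin n → K, Function.Injective t ∧ ∀ i, p.IsRoot (t i) := by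
  classical
  have hcard : Fintype.card p.roots.toFinset = n := by
    rw [Fintype.card_coe, Multiset.toFinset_card_of_nodup (nodup_roots hp),
      IsAlgClosed.card_roots_eq_natDegree, hn]
  let e := Fintype.equivFinOfCardEq hcard
  refine ⟨fun i => e.symm i, Subtype.val_injective.comp e.symm.injective, fun i => ?_⟩
  have := (e.symm i).2
  rw [Multiset.mem_toFinset, mem_roots hp.ne_zero] at this
  exact this

theorem exists_monic_mul_X_pow_sub_C_eq {R : Type*} [CommRing R] [Nontrivial R] (ρ : R)
    {r s α : ℕ} (hα : 0 < α) (h : r + α ≤ s) :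
    ∃ (G : R[X]) (L : ℕ) (c : R), G.Monic ∧ G.natDegree = s + 1 ∧ L + r ≤ s ∧
      G * (X ^ α - C ρ) = X ^ (s + 1 + α) - C c * X ^ L := by
  obtain ⟨N, hrN, hNr⟩ : ∃ N, r < α * N ∧ α * N ≤ r + α :=
    ⟨r / α + 1, Nat.lt_mul_div_succ r hα, by grind [Nat.mul_div_le r α]⟩
  obtain ⟨q, hq⟩ := sub_dvd_pow_sub_pow (X ^ α : R[X]) (C ρ) (N + 1)
  rw [← pow_mul, ← C_pow] at hq
  have hlin : (X ^ α - C ρ : R[X]).Monic := monic_X_pow_sub_C ρ hα.ne'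
  have hq_monic : q.Monic := hlin.of_mul_monic_left (hq ▸ monic_X_pow_sub_C _ (by positivity))
  have hq_deg : q.natDegree = α * N := by
    have := hlin.natDegree_mul hq_monic
    rw [← hq, natDegree_X_pow_sub_C, natDegree_X_pow_sub_C] at this
    linarith
  refine ⟨X ^ (s + 1 - α * N) * q, s + 1 - α * N, ρ ^ (N + 1), (monic_X_pow _).mul hq_monic,
    ?_, by omega, ?_⟩
  · rw [(monic_X_pow _).natDegree_mul hq_monic, natDegree_X_pow, hq_deg]
    omega
  · rw [mul_assoc, mul_comm q, ← hq, mul_sub, ← pow_add, mul_comm (X ^ _) (C _), mul_add,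
      mul_one]
    congr 2
    omega

theorem exists_monic_separable_coeff_mul_eq_zero [CharZero K] {u : K} (hu : u ≠ 0) (v : K)
    {r s α : ℕ} (hα : 0 < α) (h : r + α ≤ s) :
    ∃ p : K[X], p.Monic ∧ p.natDegree = s + 1 ∧ p.Separable ∧
      ∀ k ∈ Icc (s + 1) (r + s + α), (p * (X ^ r * (C u * X ^ α + C v))).coeff k = 0 := by
  obtain ⟨G, L, c, hG, hG_deg, hL, hGmul⟩ := exists_monic_mul_X_pow_sub_C_eq (-v / u) hα h
  obtain ⟨γ, hsep⟩ := exists_separable_add_C (P := G) (derivative_eq_zero.not.2 (by omega))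
  refine ⟨G + C γ, hG.add_of_left ?_, by rw [natDegree_add_C, hG_deg], hsep, fun k hk => ?_⟩
  · rw [degree_eq_natDegree hG.ne_zero, hG_deg]
    exact degree_C_le.trans_lt (by exact_mod_cast Nat.succ_pos s)
  have hfactor : C u * X ^ α + C v = C u * (X ^ α - C (-v / u)) := by
    rw [mul_sub, ← C_mul, mul_div_cancel₀ _ hu, C_neg, sub_neg_eq_add]
  have hexpand : (G + C γ) * (X ^ r * (C u * X ^ α + C v))
      = C u * X ^ (r + (s + 1 + α)) - C (u * c) * X ^ (r + L)
        + C (u * γ) * X ^ (r + α) - C (u * γ * (-v / u)) * X ^ r := by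
    rw [hfactor, pow_add, pow_add, pow_add]
    simp only [C_mul]
    linear_combination (C u * X ^ r) * hGmul
  rw [mem_Icc] at hk
  rw [hexpand]
  simp only [coeff_add, coeff_sub, coeff_C_mul_X_pow]
  rw [if_neg (by omega), if_neg (by omega), if_neg (by omega), if_neg (by omega)]
  simp

end Polynomial

section Recurrence

variable {K : Type*} [Field K]

/-- `p` annihilates `f` on `[0, D]` under the shift `f ↦ f (· + 1)`, at every position where
this only involves values of `f` on `[0, D]`. -/
def SolvesRecurrenceUpTo (p : Polynomial K) (D : ℕ) (f : ℕ → K) : Prop :=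
  ∀ e, e + p.natDegree ≤ D → ∑ j ∈ range (p.natDegree + 1), p.coeff j * f (e + j) = 0

theorem solvesRecurrenceUpTo_of_coeff_mul {p R : Polynomial K} {D : ℕ} {f : ℕ → K}
    (hR : ∀ k ≤ D, R.coeff k = f (D - k))
    (h : ∀ k, p.natDegree ≤ k → k ≤ D → (p * R).coeff k = 0) :
    SolvesRecurrenceUpTo p D f := by
  intro e he
  have hsum : (p * R).coeff (D - e) = ∑ j ∈ range (D - e + 1), p.coeff j * f (e + j) := by
    rw [Polynomial.coeff_mul, Nat.sum_antidiagonal_eq_sum_range_succ_mk]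
    refine sum_congr rfl fun j hj => ?_
    rw [hR _ (by omega), show D - (D - e - j) = e + j by grind]
  rw [← h (D - e) (by omega) (by omega), hsum]
  refine sum_subset (range_subset_range.2 (by omega)) fun j _ hj => ?_
  rw [Polynomial.coeff_eq_zero_of_natDegree_lt (by simpa using hj), zero_mul]

theorem solvesRecurrenceUpTo_sum_mul_pow {ι : Type*} [Fintype ι] {p : Polynomial K}
    {t : ι → K} (ht : ∀ i, p.IsRoot (t i)) (lam : ι → K) (D : ℕ) :
    SolvesRecurrenceUpTo p D fun e => ∑ i, lam i * t i ^ e := by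
  intro e _
  have hroot : ∀ i, ∑ j ∈ range (p.natDegree + 1), p.coeff j * t i ^ j = 0 := fun i => by
    rw [← Polynomial.eval_eq_sum_range, (ht i).eq_zero]
  simp_rw [mul_sum]
  rw [sum_comm]
  refine sum_eq_zero fun i _ => ?_
  calc ∑ j ∈ range (p.natDegree + 1), p.coeff j * (lam i * t i ^ (e + j))
      = lam i * t i ^ e * ∑ j ∈ range (p.natDegree + 1), p.coeff j * t i ^ j := by
        rw [mul_sum]; exact sum_congr rfl fun j _ => by ring
    _ = 0 := by rw [hroot, mul_zero]

theorem SolvesRecurrenceUpTo.eq_of_forall_lt_natDegree {p : Polynomial K} {D : ℕ}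
    {f g : ℕ → K} (hp : p.Monic) (hf : SolvesRecurrenceUpTo p D f)
    (hg : SolvesRecurrenceUpTo p D g) (hinit : ∀ e < p.natDegree, f e = g e) :
    ∀ e ≤ D, f e = g e := by
  intro e
  induction e using Nat.strong_induction_on with
  | _ e ih =>
    intro he
    by_cases hlt : e < p.natDegree
    · exact hinit e hlt
    obtain ⟨e, rfl⟩ : ∃ e', e = e' + p.natDegree := ⟨e - p.natDegree, by omega⟩
    have hf' := hf e he
    have hg' := hg e he
    rw [sum_range_succ, hp.coeff_natDegree, one_mul] at hf' hg'
    have hlower : ∑ j ∈ range p.natDegree, p.coeff j * f (e + j)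
        = ∑ j ∈ range p.natDegree, p.coeff j * g (e + j) :=
      sum_congr rfl fun j hj => by
        rw [mem_range] at hj
        rw [ih (e + j) (by omega) (by omega)]
    linear_combination hf' - hg' - hlower

theorem exists_sum_mul_pow_eq {n : ℕ} {t : Fin n → K} (ht : Function.Injective t)
    (f : ℕ → K) : ∃ lam : Fin n → K, ∀ e < n, ∑ i, lam i * t i ^ e = f e := by
  have hV : IsUnit (Matrix.vandermonde t) := (Matrix.isUnit_iff_isUnit_det _).2
    (isUnit_iff_ne_zero.2 (Matrix.det_vandermonde_ne_zero_iff.2 ht))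
  obtain ⟨lam, hlam⟩ := Matrix.vecMul_surjective_iff_isUnit.2 hV fun e => f e
  exact ⟨lam, fun e he => by
    simpa [Matrix.vecMul, dotProduct, Matrix.vandermonde_apply] using congrFun hlam ⟨e, he⟩⟩

theorem SolvesRecurrenceUpTo.exists_eq_sum_mul_pow {p : Polynomial K} {D n : ℕ} {f : ℕ → K}
    (hf : SolvesRecurrenceUpTo p D f) (hp : p.Monic) (hn : p.natDegree = n) {t : Fin n → K}
    (ht : Function.Injective t) (hroot : ∀ i, p.IsRoot (t i)) :
    ∃ lam : Fin n → K, ∀ e ≤ D, f e = ∑ i, lam i * t i ^ e := by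
  obtain ⟨lam, hlam⟩ := exists_sum_mul_pow_eq ht f
  refine ⟨lam, hf.eq_of_forall_lt_natDegree hp (solvesRecurrenceUpTo_sum_mul_pow hroot lam D)
    fun e he => (hlam e (hn ▸ he)).symm⟩

end Recurrence

theorem sum_mul_pow_mul_pow_eq_zero_of_forall_Icc {R ι : Type*} [CommRing R] [IsDomain R]
    [DecidableEq ι] {m : ℕ} (hm : 0 < m) (S : Finset ι) (A u v : ι → R) (n : ℕ)
    (h : ∀ j ∈ Icc 1 #S, ∑ l ∈ S, A l * u l ^ (m + j) * v l ^ (#S - j + n) = 0) :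
    ∑ l ∈ S, A l * u l ^ m * v l ^ (#S + n) = 0 := by
  induction S using Finset.induction_on generalizing A n with
  | empty => simp
  | @insert i S hi ih =>
    simp only [card_insert_of_notMem hi, mem_Icc] at h ⊢
    by_cases hui : u i = 0
    · have hdrop : ∀ k, 0 < k → ∀ e, ∑ l ∈ insert i S, A l * u l ^ k * v l ^ e
          = ∑ l ∈ S, A l * u l ^ k * v l ^ e := fun k hk e => by
        rw [sum_insert hi, hui, zero_pow hk.ne', mul_zero, zero_mul, zero_add]
      rw [hdrop m hm, show #S + 1 + n = #S + (n + 1) by omega]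
      refine ih A (n + 1) fun j hj => ?_
      rw [mem_Icc] at hj
      rw [← hdrop _ (by omega), ← h j ⟨hj.1, by omega⟩,
        show #S + 1 - j + n = #S - j + (n + 1) by omega]
    · -- The operator `g ↦ u i * g - v i * (shifted g)` kills the `i`-th term.
      have hdiff : ∀ k e, ∑ l ∈ S, A l * (u i * v l - v i * u l) * u l ^ k * v l ^ e
          = u i * ∑ l ∈ insert i S, A l * u l ^ k * v l ^ (e + 1)
            - v i * ∑ l ∈ insert i S, A l * u l ^ (k + 1) * v l ^ e := fun k e => by
        have hterm : ∑ l ∈ S, A l * (u i * v l - v i * u l) * u l ^ k * v l ^ e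
            = ∑ l ∈ S, (u i * (A l * u l ^ k * v l ^ (e + 1))
              - v i * (A l * u l ^ (k + 1) * v l ^ e)) :=
          sum_congr rfl fun l _ => by ring
        rw [hterm, sum_sub_distrib, ← mul_sum, ← mul_sum, sum_insert hi, sum_insert hi]
        ring
      have hkilled := ih (fun l => A l * (u i * v l - v i * u l)) n fun j hj => by
        rw [mem_Icc] at hj
        have hj0 := h j ⟨hj.1, by omega⟩
        have hj1 := h (j + 1) ⟨by omega, by omega⟩
        rw [show #S + 1 - j + n = #S - j + n + 1 by omega] at hj0
        rw [show #S + 1 - (j + 1) + n = #S - j + n by omega, ← add_assoc] at hj1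
        rw [hdiff, hj0, hj1, mul_zero, mul_zero, sub_zero]
      have h1 := h 1 ⟨le_rfl, by omega⟩
      rw [Nat.add_sub_cancel] at h1
      rw [hdiff, h1, mul_zero, sub_zero, show #S + n + 1 = #S + 1 + n by ring] at hkilled
      exact (mul_eq_zero.1 hkilled).resolve_left hui

theorem coeff_C_mul_X_pow_mul_X_pow {R : Type*} [CommSemiring R] (a : R) (m n : ℕ)
    (ξ : Fin 2 →₀ ℕ) :
    coeff ξ (C a * X 0 ^ m * X 1 ^ n) = if ξ 0 = m ∧ ξ 1 = n then a else 0 := by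
  rw [C_mul_X_pow_eq_monomial, X_pow_eq_monomial, monomial_mul, mul_one, coeff_monomial]
  refine if_congr ?_ rfl rfl
  simp [Finsupp.ext_iff, Fin.forall_fin_two, eq_comm]

theorem coeff_lin_pow (c : ℂ × ℂ) (N : ℕ) (ξ : Fin 2 →₀ ℕ) :
    coeff ξ (lin c ^ N) =
      if ξ 0 + ξ 1 = N then N.choose (ξ 0) * c.1 ^ ξ 0 * c.2 ^ ξ 1 else 0 := by
  have hterm : ∀ k ∈ range (N + 1),
      (C c.1 * X 0) ^ k * (C c.2 * X 1) ^ (N - k) * (N.choose k : MvPolynomial (Fin 2) ℂ)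
      = C (N.choose k * c.1 ^ k * c.2 ^ (N - k)) * X 0 ^ k * X 1 ^ (N - k) := fun k _ => by
    simp only [mul_pow, map_mul, map_pow, map_natCast]
    ring
  rw [lin, add_pow, sum_congr rfl hterm, coeff_sum]
  simp only [coeff_C_mul_X_pow_mul_X_pow]
  split_ifs with hξ
  · rw [sum_eq_single (ξ 0)]
    · rw [if_pos ⟨rfl, by omega⟩, show N - ξ 0 = ξ 1 by omega]
    · exact fun k _ hk => if_neg fun h => hk h.1.symm
    · exact fun h => absurd (mem_range.2 (by omega)) h
  · exact sum_eq_zero fun k hk => if_neg fun h => hξ (by rw [mem_range] at hk; omega)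

theorem coeff_sum_C_mul_lin_pow {k : ℕ} (A : Fin k → ℂ) (c : Fin k → ℂ × ℂ) (d : ℕ)
    (ξ : Fin 2 →₀ ℕ) :
    coeff ξ (∑ i, C (A i) * lin (c i) ^ d) =
      if ξ 0 + ξ 1 = d then d.choose (ξ 0) * ∑ i, A i * (c i).1 ^ ξ 0 * (c i).2 ^ ξ 1
      else 0 := by
  simp only [coeff_sum, coeff_C_mul, coeff_lin_pow]
  split_ifs
  · rw [mul_sum]; exact sum_congr rfl fun i _ => by ring
  · simp

theorem binomial_ne_sum_C_mul_lin_pow {b : ℂ} (hb : b ≠ 0) (a : ℂ) {r s α : ℕ}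
    (hα : 1 ≤ α) {k : ℕ} (hk : k ≤ s) (A : Fin k → ℂ) (c : Fin k → ℂ × ℂ) :
    C a * X 0 ^ r * X 1 ^ (s + α) + C b * X 0 ^ (r + α) * X 1 ^ s
      ≠ ∑ i, C (A i) * lin (c i) ^ (r + s + α) := by
  intro hF
  have hcoeff : ∀ j ≤ k, (if j = 0 then b else 0) = (r + s + α).choose (r + α + j) *
      ∑ i, A i * (c i).1 ^ (r + α + j) * (c i).2 ^ (s - j) := by
    intro j hj
    set ξ : Fin 2 →₀ ℕ := Finsupp.single 0 (r + α + j) + Finsupp.single 1 (s - j)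
    have hξ0 : ξ 0 = r + α + j := by simp [ξ]
    have hξ1 : ξ 1 = s - j := by simp [ξ]
    have := congrArg (coeff ξ) hF
    rw [coeff_add, coeff_C_mul_X_pow_mul_X_pow, coeff_C_mul_X_pow_mul_X_pow,
      coeff_sum_C_mul_lin_pow] at this
    simp only [hξ0, hξ1] at this
    rw [if_neg (show ¬(r + α + j = r ∧ s - j = s + α) by omega), zero_add,
      if_pos (show r + α + j + (s - j) = r + s + α by omega)] at this
    rw [← this]
    exact if_congr (by omega) rfl rfl
  have hchoose : ∀ j ≤ k, ((r + s + α).choose (r + α + j) : ℂ) ≠ 0 := fun j hj =>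
    Nat.cast_ne_zero.2 (Nat.choose_pos (by omega)).ne'
  have hvanish := sum_mul_pow_mul_pow_eq_zero_of_forall_Icc (m := r + α) (by omega) univ A
    (fun i => (c i).1) (fun i => (c i).2) (s - k) fun j hj => by
      rw [mem_Icc, card_univ, Fintype.card_fin] at hj
      rw [card_univ, Fintype.card_fin, show k - j + (s - k) = s - j by omega]
      have := hcoeff j hj.2
      rw [if_neg (by omega), eq_comm, mul_eq_zero] at this
      exact this.resolve_left (hchoose j hj.2)
  rw [card_univ, Fintype.card_fin, Nat.add_sub_cancel' hk] at hvanish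
  have := hcoeff 0 (Nat.zero_le k)
  rw [if_pos rfl, add_zero, Nat.sub_zero, hvanish, mul_zero] at this
  exact hb this

theorem exists_binomial_eq_sum_C_mul_lin_pow (a : ℂ) {b : ℂ} (hb : b ≠ 0) {r s α : ℕ}
    (hα : 1 ≤ α) (h : r + α ≤ s) :
    ∃ (A : Fin (s + 1) → ℂ) (c : Fin (s + 1) → ℂ × ℂ),
      C a * X 0 ^ r * X 1 ^ (s + α) + C b * X 0 ^ (r + α) * X 1 ^ s
        = ∑ i, C (A i) * lin (c i) ^ (r + s + α) := by
  have hchoose : ∀ m ≤ r + s + α, ((r + s + α).choose m : ℂ) ≠ 0 := fun m hm =>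
    Nat.cast_ne_zero.2 (Nat.choose_pos hm).ne'
  obtain ⟨a', ha'⟩ : ∃ a', a' * (r + s + α).choose r = a :=
    ⟨a / (r + s + α).choose r, div_mul_cancel₀ a (hchoose r (by omega))⟩
  obtain ⟨b', hb'⟩ : ∃ b', b' * (r + s + α).choose (r + α) = b :=
    ⟨b / (r + s + α).choose (r + α), div_mul_cancel₀ b (hchoose _ (by omega))⟩
  -- `f e` is the coefficient of `x ^ (r + s + α - e) * y ^ e`, divided by the binomial.
  let f : ℕ → ℂ := fun e => (if e = s + α then a' else 0) + (if e = s then b' else 0)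
  have hb'0 : b' ≠ 0 := left_ne_zero_of_mul (hb' ▸ hb)
  obtain ⟨p, hmonic, hdeg, hsep, hgap⟩ :=
    Polynomial.exists_monic_separable_coeff_mul_eq_zero hb'0 a' (by omega) h
  have hrec : SolvesRecurrenceUpTo p (r + s + α) f := by
    refine solvesRecurrenceUpTo_of_coeff_mul (fun k hk => ?_) fun k hk hkd =>
      hgap k (mem_Icc.2 ⟨by omega, hkd⟩)
    simp only [Polynomial.coeff_X_pow_mul', Polynomial.coeff_add, Polynomial.coeff_C_mul_X_pow,
      Polynomial.coeff_C, f]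
    split_ifs <;> first | rfl | omega | simp
  obtain ⟨t, ht, hroot⟩ := Polynomial.exists_injective_isRoot hsep hdeg
  obtain ⟨lam, hlam⟩ := hrec.exists_eq_sum_mul_pow hmonic hdeg ht hroot
  refine ⟨lam, fun i => (1, t i), MvPolynomial.ext _ _ fun ξ => ?_⟩
  rw [coeff_add, coeff_C_mul_X_pow_mul_X_pow, coeff_C_mul_X_pow_mul_X_pow,
    coeff_sum_C_mul_lin_pow]
  by_cases hξ : ξ 0 + ξ 1 = r + s + α
  · have hsum : ∑ i, lam i * (1, t i).1 ^ ξ 0 * (1, t i).2 ^ ξ 1 = f (ξ 1) := by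
      simpa using (hlam (ξ 1) (by omega)).symm
    rw [if_pos hξ, hsum]
    rcases (by omega : (ξ 0 = r ∧ ξ 1 = s + α) ∨ (ξ 0 = r + α ∧ ξ 1 = s) ∨
      (ξ 1 ≠ s + α ∧ ξ 1 ≠ s)) with ⟨h0, h1⟩ | ⟨h0, h1⟩ | ⟨h1, h2⟩
    · simp only [f, h0, h1, and_self, if_true, if_neg (show s + α ≠ s by omega),
        if_neg (show ¬(r = r + α ∧ s + α = s) by omega), ← ha']
      ring
    · simp only [f, h0, h1, and_self, if_true, if_neg (show s ≠ s + α by omega),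
        if_neg (show ¬(r + α = r ∧ s = s + α) by omega), ← hb']
      ring
    · simp only [f, h1, h2, and_false, if_false]
      ring
  · rw [if_neg hξ, if_neg (by omega), if_neg (by omega), add_zero]

theorem waring_rank_binomial_case1_general (a b : ℂ) (hb : b ≠ 0)
    (r s α : ℕ) (hα : 1 ≤ α) (h : r + α ≤ s) :
    waringRank (r + s + α)
      (C a * X (0 : Fin 2) ^ r * X 1 ^ (s + α) + C b * X (0 : Fin 2) ^ (r + α) * X 1 ^ s)
      = s + 1 := by
  obtain ⟨A, c, hF⟩ := exists_binomial_eq_sum_C_mul_lin_pow a hb hα h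
  refine le_antisymm (Nat.sInf_le ⟨A, c, hF⟩) (le_csInf ⟨s + 1, A, c, hF⟩ ?_)
  rintro k ⟨A', c', hF'⟩
  by_contra! hk
  exact binomial_ne_sum_C_mul_lin_pow hb a hα (Nat.lt_succ_iff.1 hk) A' c' hF'

theorem waring_rank_binomial_case1 (a b : ℂ) (ha : a ≠ 0) (hb : b ≠ 0)
    (r s α : ℕ) (hrs : r ≤ s) (hα : 1 ≤ α) (h : r + α ≤ s) :
    waringRank (r + s + α)
      (C a * X (0 : Fin 2) ^ r * X 1 ^ (s + α) + C b * X (0 : Fin 2) ^ (r + α) * X 1 ^ s)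
      = s + 1 :=
  waring_rank_binomial_case1_general a b hb r s α hα h
end

section
/- Let F = a x^r y^{r+1} + b x^{r+1} y^r with a,b ∈ ℂ nonzero and r ≥ 0. Then the Waring rank of F equals r + 1. -/
open MvPolynomial

/-!
With `ω` a primitive `(r + 2)`-th root of unity, orthogonality of characters kills every term of
`∑ j, (ω ^ (2 j) - ω ^ j) (ω ^ j x + y) ^ (2 r + 1)` except those in `x ^ r y ^ (r + 1)` and
`x ^ (r + 1) y ^ r`; substituting `x ↦ b x`, `y ↦ -a y` and dropping the vanishing `j = 0` term writes
`F` as a combination of `r + 1` powers. Conversely, the `(r + 1) × (r + 1)` catalecticant of a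
combination of `n` powers of linear forms factors through `ℂⁿ`, so has rank at most `n`, while that
of `F` is anti-triangular with anti-diagonal `a / (2 r + 1).choose r ≠ 0`, hence invertible.
-/

open Finset

theorem IsPrimitiveRoot.sum_range_pow_mul {R : Type*} [CommRing R] [IsDomain R] {ζ : R} {k : ℕ}
    (hζ : IsPrimitiveRoot ζ k) (m : ℕ) :
    ∑ j ∈ range k, ζ ^ (j * m) = if k ∣ m then (k : R) else 0 := by
  simp_rw [mul_comm _ m, pow_mul]
  split_ifs with hkm
  · simp [(hζ.pow_eq_one_iff_dvd m).2 hkm]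
  · have hne : ζ ^ m - 1 ≠ 0 := sub_ne_zero.2 fun h => hkm ((hζ.pow_eq_one_iff_dvd m).1 h)
    refine (mul_eq_zero.1 ?_).resolve_right hne
    rw [geom_sum_mul, ← pow_mul, mul_comm, pow_mul, hζ.pow_eq_one, one_pow, sub_self]

theorem Nat.dvd_iff_eq_of_pos_of_lt_two_mul {n k : ℕ} (hk0 : 0 < k) (hk : k < 2 * n) :
    n ∣ k ↔ k = n :=
  ⟨fun h => Nat.eq_of_dvd_of_lt_two_mul hk0.ne' h hk, fun h => h ▸ dvd_rfl⟩

theorem IsPrimitiveRoot.sum_sq_sub_mul_pow {R : Type*} [CommRing R] [IsDomain R] {ω : R} {r : ℕ}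
    (hω : IsPrimitiveRoot ω (r + 2)) {k : ℕ} (hk : k < 2 * r + 2) :
    ∑ j ∈ range (r + 2), (ω ^ (2 * j) - ω ^ j) * ω ^ (j * k) =
      (if k = r then (r + 2 : R) else 0) - (if k = r + 1 then (r + 2 : R) else 0) := by
  have h2 : r + 2 ∣ k + 2 ↔ k = r := by
    rw [Nat.dvd_iff_eq_of_pos_of_lt_two_mul (by omega) (by omega)]; omega
  have h1 : r + 2 ∣ k + 1 ↔ k = r + 1 := by
    rw [Nat.dvd_iff_eq_of_pos_of_lt_two_mul (by omega) (by omega)]; omega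
  have hsplit : ∀ j,
      (ω ^ (2 * j) - ω ^ j) * ω ^ (j * k) = ω ^ (j * (k + 2)) - ω ^ (j * (k + 1)) :=
    fun j => by ring
  simp_rw [hsplit, sum_sub_distrib, hω.sum_range_pow_mul, h2, h1]
  push_cast
  rfl

theorem IsPrimitiveRoot.sum_sq_sub_mul_add_pow {R : Type*} [CommRing R] [IsDomain R] {ω : R}
    {r : ℕ} (hω : IsPrimitiveRoot ω (r + 2)) (x y : R) :
    ∑ j ∈ range (r + 2), (ω ^ (2 * j) - ω ^ j) * (ω ^ j * x + y) ^ (2 * r + 1) =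
      ((r + 2) * (2 * r + 1).choose r : ℕ) * (x ^ r * y ^ (r + 1) - x ^ (r + 1) * y ^ r) := by
  have hexpand : ∀ j, (ω ^ (2 * j) - ω ^ j) * (ω ^ j * x + y) ^ (2 * r + 1) =
      ∑ k ∈ range (2 * r + 2), x ^ k * y ^ (2 * r + 1 - k) * ((2 * r + 1).choose k : R) *
        ((ω ^ (2 * j) - ω ^ j) * ω ^ (j * k)) := by
    intro j
    rw [add_pow, mul_sum]
    refine sum_congr rfl fun k _ => ?_
    ring
  simp_rw [hexpand]
  rw [sum_comm]
  simp_rw [← mul_sum]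
  rw [sum_congr rfl fun k hk => by rw [hω.sum_sq_sub_mul_pow (mem_range.1 hk)]]
  simp_rw [mul_sub, mul_ite, mul_zero, sum_sub_distrib, sum_ite_eq', mem_range]
  rw [if_pos (by omega), if_pos (by omega), show 2 * r + 1 - r = r + 1 by omega,
    show 2 * r + 1 - (r + 1) = r by omega, Nat.choose_symm_half]
  push_cast
  ring

theorem exists_waring_decomposition_binomial (a b : ℂ) (ha : a ≠ 0) (hb : b ≠ 0) (r : ℕ) :
    ∃ (α : Fin (r + 1) → ℂ) (c : Fin (r + 1) → ℂ × ℂ),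
      C a * X (0 : Fin 2) ^ r * X 1 ^ (r + 1) + C b * X (0 : Fin 2) ^ (r + 1) * X 1 ^ r =
        ∑ i, C (α i) * lin (c i) ^ (2 * r + 1) := by
  obtain ⟨ω, hω⟩ : ∃ ω : ℂ, IsPrimitiveRoot ω (r + 2) :=
    ⟨_, Complex.isPrimitiveRoot_exp (r + 2) (by omega)⟩
  set N : ℕ := (r + 2) * (2 * r + 1).choose r
  set K : ℂ := -(N * b ^ r * (-a) ^ r)⁻¹
  have hK : K * (N * b ^ r * (-a) ^ r) = -1 := by
    have hN : (N : ℂ) ≠ 0 :=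
      Nat.cast_ne_zero.2 (Nat.mul_ne_zero (by omega) (Nat.choose_pos (by omega)).ne')
    rw [neg_mul, inv_mul_cancel₀ (by simp [hN, ha, hb])]
  refine ⟨fun j => K * (ω ^ (2 * ((j : ℕ) + 1)) - ω ^ ((j : ℕ) + 1)),
    fun j => (b * ω ^ ((j : ℕ) + 1), -a), ?_⟩
  have hsum := (hω.map_of_injective (C_injective (Fin 2) ℂ)).sum_sq_sub_mul_add_pow
    (C b * X 0) (C (-a) * X 1)
  rw [sum_range_succ', sub_self, zero_mul, add_zero,
    ← Fin.sum_univ_eq_sum_range (fun j => (C ω ^ (2 * (j + 1)) - C ω ^ (j + 1)) *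
      (C ω ^ (j + 1) * (C b * X 0) + C (-a) * X 1) ^ (2 * r + 1))] at hsum
  have hterm : ∀ j : Fin (r + 1),
      C (K * (ω ^ (2 * ((j : ℕ) + 1)) - ω ^ ((j : ℕ) + 1))) *
          lin (b * ω ^ ((j : ℕ) + 1), -a) ^ (2 * r + 1) =
        C K * ((C ω ^ (2 * ((j : ℕ) + 1)) - C ω ^ ((j : ℕ) + 1)) *
          (C ω ^ ((j : ℕ) + 1) * (C b * X 0) + C (-a) * X 1) ^ (2 * r + 1)) := by
    intro j
    simp only [lin, map_mul, map_sub, map_pow]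
    ring
  rw [sum_congr rfl fun j _ => hterm j, ← mul_sum, hsum]
  have hK' := congrArg (C (σ := Fin 2)) hK
  simp only [map_mul, map_neg, map_pow, map_natCast, map_one] at hK'
  simp only [map_neg]
  linear_combination (C a * X 0 ^ r * X 1 ^ (r + 1) + C b * X 0 ^ (r + 1) * X 1 ^ r) * hK'

theorem coeff_single_add_single_C_mul_X_pow {R : Type*} [CommSemiring R] (a : R) {i j d : ℕ}
    (hd : i + j = d) (k : ℕ) :
    coeff (Finsupp.single 0 k + Finsupp.single 1 (d - k)) (C a * X (0 : Fin 2) ^ i * X 1 ^ j) =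
      if k = i then a else 0 := by
  rw [mul_assoc, X_pow_eq_monomial, X_pow_eq_monomial, monomial_mul, one_mul, C_mul_monomial,
    mul_one, coeff_monomial]
  refine if_congr ⟨fun h => ?_, fun h => by subst h hd; rw [Nat.add_sub_cancel_left]⟩ rfl rfl
  have := congrArg (· 0) h
  simpa using this.symm

theorem coeff_single_add_single_lin_pow (c : ℂ × ℂ) {k d : ℕ} (hk : k ≤ d) :
    coeff (Finsupp.single 0 k + Finsupp.single 1 (d - k)) (lin c ^ d) =
      d.choose k * c.1 ^ k * c.2 ^ (d - k) := by
  have hterm : ∀ i ∈ range (d + 1),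
      (C c.1 * X 0) ^ i * (C c.2 * X 1) ^ (d - i) * (d.choose i : MvPolynomial (Fin 2) ℂ) =
      C (d.choose i * c.1 ^ i * c.2 ^ (d - i)) * X 0 ^ i * X 1 ^ (d - i) := by
    intro i _
    simp only [map_mul, map_pow, map_natCast]
    ring
  rw [lin, add_pow, sum_congr rfl hterm, coeff_sum,
    sum_congr rfl fun i hi => coeff_single_add_single_C_mul_X_pow _
      (Nat.add_sub_cancel' (Nat.lt_succ_iff.1 (mem_range.1 hi))) k,
    sum_ite_eq, if_pos (mem_range.2 (Nat.lt_succ_of_le hk))]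

/-- Writing `F = ∑ k, d.choose k * m k * x ^ k * y ^ (d - k)`, this is the Hankel matrix
`(m (s + t))` with `s, t ≤ r`. -/
noncomputable def catalecticant (d r : ℕ) (F : MvPolynomial (Fin 2) ℂ) :
    Matrix (Fin (r + 1)) (Fin (r + 1)) ℂ :=
  Matrix.of fun s t =>
    coeff (Finsupp.single 0 (s + t : ℕ) + Finsupp.single 1 (d - (s + t))) F / d.choose (s + t)

noncomputable def homVandermonde (r : ℕ) {n : ℕ} (c : Fin n → ℂ × ℂ) :
    Matrix (Fin (r + 1)) (Fin n) ℂ :=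
  Matrix.of fun s i => (c i).1 ^ (s : ℕ) * (c i).2 ^ (r - s)

theorem catalecticant_sum_C_mul_lin_pow {d r n : ℕ} (hd : 2 * r ≤ d) (α : Fin n → ℂ)
    (c : Fin n → ℂ × ℂ) :
    catalecticant d r (∑ i, C (α i) * lin (c i) ^ d) =
      homVandermonde r c * Matrix.diagonal (fun i => α i * (c i).2 ^ (d - 2 * r)) *
        (homVandermonde r c).transpose := by
  ext s t
  have hst : (s : ℕ) + t ≤ d := by omega
  have hchoose : (d.choose (s + t) : ℂ) ≠ 0 := Nat.cast_ne_zero.2 (Nat.choose_pos hst).ne'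
  have hexp : d - (s + t) = (r - s) + (d - 2 * r) + (r - t) := by omega
  simp only [catalecticant, homVandermonde, Matrix.of_apply, coeff_sum, coeff_C_mul,
    coeff_single_add_single_lin_pow _ hst, sum_div, Matrix.mul_apply, Matrix.diagonal_apply,
    Matrix.transpose_apply, mul_ite, mul_zero, sum_ite_eq', mem_univ, if_true]
  refine sum_congr rfl fun i _ => ?_
  rw [hexp]
  field_simp
  ring

theorem rank_catalecticant_sum_C_mul_lin_pow_le {d r n : ℕ} (hd : 2 * r ≤ d) (α : Fin n → ℂ)
    (c : Fin n → ℂ × ℂ) :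
    (catalecticant d r (∑ i, C (α i) * lin (c i) ^ d)).rank ≤ n := by
  rw [catalecticant_sum_C_mul_lin_pow hd, Matrix.mul_assoc]
  exact (Matrix.rank_mul_le_left _ _).trans (Matrix.rank_le_width _)

theorem Matrix.det_ne_zero_of_antidiagonal {K : Type*} [Field K] {r : ℕ}
    (M : Matrix (Fin (r + 1)) (Fin (r + 1)) K)
    (hzero : ∀ s t : Fin (r + 1), (s : ℕ) + t < r → M s t = 0)
    (hanti : ∀ s, M s s.rev ≠ 0) : M.det ≠ 0 := by
  have hlower : (M.submatrix id Fin.revPerm).IsLowerTriangular := fun s t hst => by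
    refine hzero s _ ?_
    have : (s : ℕ) < t := hst
    rw [Fin.revPerm_apply, Fin.val_rev]; omega
  have hdet := Matrix.det_permute' Fin.revPerm M
  rw [det_of_isLowerTriangular _ hlower] at hdet
  intro h
  rw [h, mul_zero] at hdet
  exact prod_ne_zero_iff.2 (fun s _ => hanti s) hdet

theorem det_catalecticant_binomial_ne_zero (a b : ℂ) (ha : a ≠ 0) (r : ℕ) :
    (catalecticant (2 * r + 1) r
      (C a * X (0 : Fin 2) ^ r * X 1 ^ (r + 1) + C b * X (0 : Fin 2) ^ (r + 1) * X 1 ^ r)).det ≠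
      0 := by
  have hcoeff : ∀ k, coeff (Finsupp.single 0 k + Finsupp.single 1 (2 * r + 1 - k))
      (C a * X (0 : Fin 2) ^ r * X 1 ^ (r + 1) + C b * X (0 : Fin 2) ^ (r + 1) * X 1 ^ r) =
        (if k = r then a else 0) + (if k = r + 1 then b else 0) := fun k => by
    rw [coeff_add, coeff_single_add_single_C_mul_X_pow a (by omega),
      coeff_single_add_single_C_mul_X_pow b (by omega)]
  apply Matrix.det_ne_zero_of_antidiagonal
  · intro s t hst
    simp only [catalecticant, Matrix.of_apply, hcoeff]
    rw [if_neg (by omega), if_neg (by omega), add_zero, zero_div]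
  · intro s
    simp only [catalecticant, Matrix.of_apply, hcoeff, Fin.val_rev]
    rw [if_pos (by omega), if_neg (by omega), add_zero]
    exact div_ne_zero ha (Nat.cast_ne_zero.2 (Nat.choose_pos (by omega)).ne')

theorem waring_rank_binomial_symmetric (a b : ℂ) (ha : a ≠ 0) (hb : b ≠ 0) (r : ℕ) :
    waringRank (2 * r + 1)
      (C a * X (0 : Fin 2) ^ r * X 1 ^ (r + 1) + C b * X (0 : Fin 2) ^ (r + 1) * X 1 ^ r)
      = r + 1 := by
  obtain ⟨α, c, hF⟩ := exists_waring_decomposition_binomial a b ha hb r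
  refine le_antisymm (Nat.sInf_le ⟨α, c, hF⟩) (le_csInf ⟨r + 1, α, c, hF⟩ ?_)
  rintro n ⟨α', c', hF'⟩
  have hfull := Matrix.rank_of_isUnit _
    ((Matrix.isUnit_iff_isUnit_det _).2 (det_catalecticant_binomial_ne_zero a b ha r).isUnit)
  rw [Fintype.card_fin, hF'] at hfull
  exact hfull ▸ rank_catalecticant_sum_C_mul_lin_pow_le (by omega) α' c'
end

section
/- Let F = a y^{s+α} + b x^α y^s with a,b ∈ ℂ nonzero, s > 0, α ≥ 1. If α ≤ s then rk(F) = s+1, and if α > s then rk(F) = α. -/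
open MvPolynomial

/-!
Write a binary form of degree `d` as `∑ (d choose k) f k x^k y^(d-k)`. Then
`F = ∑ A i (p i x + q i y)^d` says exactly that `f k = ∑ A i (p i)^k (q i)^(d-k)` for `k ≤ d`, and
for our `F` the sequence is `f = a δ₀ + b' δ_α` with `b' = b / (s+α choose α)`.

Upper bound: if a monic separable `P` of degree `N` annihilates `f` on `[0, d]` (every window of
`f` satisfies the linear recurrence with characteristic polynomial `P`), then solving a
Vandermonde system at the `N` distinct roots of `P` writes `f` with `N` terms. Such a `P` is
`X^α - b'/a` when `s < α`, and a separable member of the pencil `X^(s+1) - c (X^α - b'/a)`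
when `α ≤ s`.

Lower bound: an `r`-term decomposition gives `P = ∏ (X - p i / q i)` over the points with
`q i ≠ 0`, which is separable and annihilates `f` on `[0, d]`, or only on `[0, d - 1]` but with
`deg P < r` when some `q i = 0`. For `f = a δ₀ + b' δ_α` the window ending at `α` forces
`deg P ≥ α`; and if `deg P + α ≤ n`, the windows ending at `α` together with the one starting at
`0` kill every coefficient of `P` of order `≤ α`, so `X² ∣ P`. Hence `rk F = max α (s + 1)`.
-/

def HasPowerSumRep {K : Type*} [Semiring K] (d r : ℕ) (f : ℕ → K) : Prop :=
  ∃ (A : Fin r → K) (c : Fin r → K × K), ∀ k ≤ d, f k = ∑ i, A i * (c i).1 ^ k * (c i).2 ^ (d - k)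

section BinaryForm

open Finset

noncomputable def binaryForm (d : ℕ) (f : ℕ → ℂ) : MvPolynomial (Fin 2) ℂ :=
  ∑ k ∈ range (d + 1), C ((d.choose k : ℂ) * f k) * X 0 ^ k * X 1 ^ (d - k)

variable {d : ℕ}

theorem binaryForm_add (f g : ℕ → ℂ) : binaryForm d (f + g) = binaryForm d f + binaryForm d g := by
  simp only [binaryForm, Pi.add_apply, mul_add, map_add, add_mul, sum_add_distrib]

theorem binaryForm_single {i : ℕ} (hi : i ≤ d) (x : ℂ) :
    binaryForm d (Pi.single i x) = C ((d.choose i : ℂ) * x) * X 0 ^ i * X 1 ^ (d - i) := by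
  rw [binaryForm, sum_eq_single_of_mem i (mem_range.2 (by omega)) fun k _ hk => by simp [hk]]
  simp

theorem coeff_binaryForm {k : ℕ} (hk : k ≤ d) (f : ℕ → ℂ) :
    (binaryForm d f).coeff (Finsupp.single 0 k + Finsupp.single 1 (d - k)) =
      d.choose k * f k := by
  have hmonomial : ∀ j, C ((d.choose j : ℂ) * f j) * X (0 : Fin 2) ^ j * X 1 ^ (d - j) =
      monomial (Finsupp.single 0 j + Finsupp.single 1 (d - j)) ((d.choose j : ℂ) * f j) := by
    intro j
    rw [X_pow_eq_monomial, X_pow_eq_monomial, C_mul_monomial, monomial_mul, mul_one, mul_one]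
  simp only [binaryForm, coeff_sum, hmonomial, coeff_monomial]
  rw [sum_eq_single_of_mem k (mem_range.2 (by omega)) fun j _ hj => if_neg fun h => hj ?_,
    if_pos rfl]
  simpa using congrArg (· 0) h

theorem binaryForm_inj {f g : ℕ → ℂ} : binaryForm d f = binaryForm d g ↔ ∀ k ≤ d, f k = g k := by
  refine ⟨fun h k hk => ?_, fun h => sum_congr rfl fun k hk => ?_⟩
  · have := congrArg (MvPolynomial.coeff (Finsupp.single 0 k + Finsupp.single 1 (d - k))) h
    rw [coeff_binaryForm hk, coeff_binaryForm hk] at this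
    exact mul_left_cancel₀ (Nat.cast_ne_zero.2 (Nat.choose_pos hk).ne') this
  · rw [h k (Nat.lt_succ_iff.1 (mem_range.1 hk))]

theorem lin_pow_eq_binaryForm (d : ℕ) (c : ℂ × ℂ) :
    lin c ^ d = binaryForm d (fun k => c.1 ^ k * c.2 ^ (d - k)) := by
  rw [lin, add_pow, binaryForm]
  refine sum_congr rfl fun k _ => ?_
  simp only [mul_pow, map_mul, map_pow, map_natCast]
  ring

theorem sum_C_mul_lin_pow_eq_binaryForm {r : ℕ} (d : ℕ) (A : Fin r → ℂ) (c : Fin r → ℂ × ℂ) :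
    ∑ i, C (A i) * lin (c i) ^ d =
      binaryForm d (fun k => ∑ i, A i * (c i).1 ^ k * (c i).2 ^ (d - k)) := by
  simp only [lin_pow_eq_binaryForm, binaryForm, mul_sum]
  rw [sum_comm]
  refine sum_congr rfl fun k _ => ?_
  simp only [map_sum, sum_mul, map_mul]
  refine sum_congr rfl fun i _ => ?_
  ring

theorem waringRank_binaryForm (d : ℕ) (f : ℕ → ℂ) :
    waringRank d (binaryForm d f) = sInf {r | HasPowerSumRep d r f} := by
  simp only [waringRank, HasPowerSumRep, sum_C_mul_lin_pow_eq_binaryForm, binaryForm_inj]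

theorem binomial_eq_binaryForm (a b : ℂ) (s α : ℕ) :
    C a * X (1 : Fin 2) ^ (s + α) + C b * X 0 ^ α * X 1 ^ s =
      binaryForm (s + α) (Pi.single 0 a + Pi.single α (b / (s + α).choose α)) := by
  have hchoose : ((s + α).choose α : ℂ) ≠ 0 := Nat.cast_ne_zero.2 (Nat.choose_pos (by omega)).ne'
  rw [binaryForm_add, binaryForm_single (Nat.zero_le _), binaryForm_single (by omega),
    mul_div_cancel₀ _ hchoose, Nat.add_sub_cancel]
  simp

end BinaryForm

namespace Polynomial

open Finset

variable {K : Type*}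

def Annihilates [Semiring K] (P : K[X]) (f : ℕ → K) (n : ℕ) : Prop :=
  ∀ k, k + P.natDegree ≤ n → ∑ j ∈ range (P.natDegree + 1), P.coeff j * f (k + j) = 0

section CommRing

variable [CommRing K] {P : K[X]} {f g : ℕ → K} {n : ℕ}

theorem Annihilates.of_eq_sum_pow {ι : Type*} {s : Finset ι} {w t : ι → K}
    (hf : ∀ k ≤ n, f k = ∑ i ∈ s, w i * t i ^ k) (hP : ∀ i ∈ s, P.eval (t i) = 0) :
    Annihilates P f n := by
  intro k hk
  calc ∑ j ∈ range (P.natDegree + 1), P.coeff j * f (k + j)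
      = ∑ i ∈ s, w i * t i ^ k * ∑ j ∈ range (P.natDegree + 1), P.coeff j * t i ^ j := by
        simp only [mul_sum]
        rw [sum_comm]
        refine sum_congr rfl fun j hj => ?_
        rw [hf _ (by grind), mul_sum]
        refine sum_congr rfl fun i _ => ?_
        ring
    _ = 0 := sum_eq_zero fun i hi => by
        rw [← eval_eq_sum_range, hP i hi, mul_zero]

theorem Annihilates.eq_of_eq_of_lt_natDegree (hP : P.Monic) (hf : P.Annihilates f n)
    (hg : P.Annihilates g n) (hinit : ∀ k < P.natDegree, f k = g k) : ∀ k ≤ n, f k = g k := by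
  intro k
  induction k using Nat.strong_induction_on with
  | _ k ih =>
    intro hkn
    rcases lt_or_ge k P.natDegree with hk | hk
    · exact hinit k hk
    obtain ⟨m, rfl⟩ := Nat.exists_eq_add_of_le' hk
    have hlast : ∀ u : ℕ → K, P.Annihilates u n →
        u (m + P.natDegree) = -∑ j ∈ range P.natDegree, P.coeff j * u (m + j) := fun u hu => by
      have := hu m hkn
      rw [sum_range_succ, hP.coeff_natDegree, one_mul] at this
      exact eq_neg_of_add_eq_zero_right this
    rw [hlast f hf, hlast g hg]
    congr 1
    refine sum_congr rfl fun j hj => ?_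
    rw [mem_range] at hj
    rw [ih (m + j) (by omega) (by omega)]

theorem sum_coeff_mul_single (i k : ℕ) (x : K) :
    ∑ j ∈ range (P.natDegree + 1), P.coeff j * (Pi.single i x : ℕ → K) (k + j) =
      if k ≤ i then P.coeff (i - k) * x else 0 := by
  split_ifs with hki
  · rw [sum_eq_single (i - k)]
    · simp [show k + (i - k) = i by omega]
    · intro j _ hj
      simp [show k + j ≠ i by omega]
    · intro hj
      rw [coeff_eq_zero_of_natDegree_lt (by simp at hj; omega), zero_mul]
  · exact sum_eq_zero fun j _ => by simp [show k + j ≠ i by omega]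

theorem sum_coeff_mul_single_add_single (i i' k : ℕ) (x y : K) :
    ∑ j ∈ range (P.natDegree + 1), P.coeff j * (Pi.single i x + Pi.single i' y : ℕ → K) (k + j) =
      (if k ≤ i then P.coeff (i - k) * x else 0) +
        (if k ≤ i' then P.coeff (i' - k) * y else 0) := by
  simp only [Pi.add_apply, mul_add, sum_add_distrib, sum_coeff_mul_single]

variable {a b : K} {α : ℕ}

theorem Annihilates.le_natDegree (hP : P.Monic) (hb : b ≠ 0)
    (h : Annihilates P (Pi.single 0 a + Pi.single α b) n) (hαn : α ≤ n) : α ≤ P.natDegree := by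
  by_contra! hlt
  have hwindow := h (α - P.natDegree) (by omega)
  rw [sum_coeff_mul_single_add_single, if_neg (by omega), if_pos (by omega),
    show α - (α - P.natDegree) = P.natDegree by omega, hP.coeff_natDegree, one_mul, zero_add]
    at hwindow
  exact hb hwindow

theorem Annihilates.lt_natDegree_add [IsDomain K] (hP : Squarefree P) (hb : b ≠ 0) (hα : 0 < α)
    (h : Annihilates P (Pi.single 0 a + Pi.single α b) n) : n < P.natDegree + α := by
  by_contra! hle
  have hlow : ∀ j < α, P.coeff j = 0 := fun j hj => by
    have hwindow := h (α - j) (by omega)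
    rw [sum_coeff_mul_single_add_single, if_neg (by omega), if_pos (by omega),
      show α - (α - j) = j by omega, zero_add] at hwindow
    exact (mul_eq_zero.1 hwindow).resolve_right hb
  have hα_coeff : P.coeff α = 0 := by
    have hwindow := h 0 (by omega)
    rw [sum_coeff_mul_single_add_single, if_pos le_rfl, if_pos (Nat.zero_le _), Nat.sub_zero,
      Nat.sub_zero, hlow 0 hα, zero_mul, zero_add] at hwindow
    exact (mul_eq_zero.1 hwindow).resolve_right hb
  have hX : X * X ∣ P := by
    rw [← pow_two]
    refine (pow_dvd_pow X (by omega : 2 ≤ α + 1)).trans (X_pow_dvd_iff.2 fun j hj => ?_)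
    rcases (Nat.lt_succ_iff.1 hj).lt_or_eq with hj | rfl
    exacts [hlow j hj, hα_coeff]
  exact not_isUnit_X (hP X hX)

end CommRing

section Field

variable [Field K] {P : K[X]} {f : ℕ → K} {n : ℕ}

theorem exists_monic_separable_annihilator {d r : ℕ} (hd : 0 < d) (h : HasPowerSumRep d r f) :
    ∃ P : K[X], P.Monic ∧ P.Separable ∧
      ∃ e ≤ 1, P.natDegree + e ≤ r ∧ P.Annihilates f (d - e) := by
  classical
  obtain ⟨A, c, hf⟩ := h
  set I := univ.filter fun i => (c i).2 ≠ 0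
  set t := fun i => (c i).1 / (c i).2
  set P := ∏ x ∈ I.image t, (X - C x)
  have hdeg : P.natDegree ≤ I.card := by
    simpa only [P, natDegree_finsetProd_X_sub_C_eq_card] using card_image_le
  -- Points with `(c i).2 = 0` only contribute to the moment of order `d`.
  have hmoments : ∀ k ≤ d, (k < d ∨ ∀ i, (c i).2 ≠ 0) →
      f k = ∑ i ∈ I, A i * (c i).2 ^ d * t i ^ k := by
    intro k hkd hk
    rw [hf k hkd, ← sum_filter_add_sum_filter_not univ fun i => (c i).2 ≠ 0]
    rw [sum_eq_zero (s := univ.filter fun i => ¬(c i).2 ≠ 0), add_zero]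
    · refine sum_congr rfl fun i hi => ?_
      have hq : (c i).2 ≠ 0 := (mem_filter.1 hi).2
      have hsplit : (c i).2 ^ d = (c i).2 ^ k * (c i).2 ^ (d - k) := by
        rw [← pow_add, Nat.add_sub_cancel' hkd]
      rw [div_pow, hsplit]
      field_simp
    · intro i hi
      have hq : (c i).2 = 0 := not_not.1 (mem_filter.1 hi).2
      rcases hk with hk | hk
      · rw [hq, zero_pow (by omega), mul_zero]
      · exact absurd hq (hk i)
  have hann : ∀ n ≤ d, (n < d ∨ ∀ i, (c i).2 ≠ 0) → P.Annihilates f n := fun n hnd hn =>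
    Annihilates.of_eq_sum_pow (fun k hk => hmoments k (by omega) (hn.imp_left fun _ => by omega))
      fun i hi => by
        rw [eval_prod]
        exact prod_eq_zero (mem_image_of_mem t hi) (by simp)
  refine ⟨P, monic_prod_of_monic _ _ fun x _ => monic_X_sub_C x,
    separable_prod_X_sub_C_iff'.2 fun x _ y _ hxy => hxy, ?_⟩
  by_cases hI : ∀ i, (c i).2 ≠ 0
  · refine ⟨0, zero_le_one, ?_, hann d le_rfl (Or.inr hI)⟩
    have := card_le_univ I
    rw [Fintype.card_fin] at this
    omega
  · refine ⟨1, le_rfl, ?_, hann (d - 1) (by omega) (Or.inl (by omega))⟩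
    obtain ⟨i₀, hi₀⟩ := not_forall.1 hI
    have := card_lt_univ_of_notMem (s := I) fun h => hi₀ (mem_filter.1 h).2
    rw [Fintype.card_fin] at this
    omega

theorem Annihilates.exists_eq_sum_pow (hP : P.Monic) {t : Fin P.natDegree → K}
    (ht : Function.Injective t) (hroot : ∀ i, P.eval (t i) = 0) (h : P.Annihilates f n) :
    ∃ A : Fin P.natDegree → K, ∀ k ≤ n, f k = ∑ i, A i * t i ^ k := by
  set V := Matrix.vandermonde t
  have hV : IsUnit V.det := (Matrix.det_vandermonde_ne_zero_iff.2 ht).isUnit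
  set A := Matrix.vecMul (fun k : Fin P.natDegree => f k) V⁻¹
  have hA : Matrix.vecMul A V = fun k : Fin P.natDegree => f k := by
    rw [Matrix.vecMul_vecMul, Matrix.nonsing_inv_mul _ hV, Matrix.vecMul_one]
  refine ⟨A, h.eq_of_eq_of_lt_natDegree hP
    (Annihilates.of_eq_sum_pow (fun _ _ => rfl) fun i _ => hroot i) fun k hk => ?_⟩
  have := congrFun hA ⟨k, hk⟩
  simp only [Matrix.vecMul, dotProduct, V, Matrix.vandermonde_apply] at this
  exact this.symm

theorem Annihilates.hasPowerSumRep [IsAlgClosed K] (hP : P.Monic) (hsep : P.Separable)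
    (h : P.Annihilates f n) : HasPowerSumRep n P.natDegree f := by
  classical
  have hcard : P.roots.toFinset.card = P.natDegree := by
    rw [Multiset.toFinset_card_of_nodup (nodup_roots hsep), IsAlgClosed.card_roots_eq_natDegree]
  set e := P.roots.toFinset.equivFinOfCardEq hcard
  set t := fun i => (e.symm i : K)
  have ht : Function.Injective t := fun i j hij => e.symm.injective (Subtype.ext hij)
  have hroot : ∀ i, P.eval (t i) = 0 := fun i =>
    (mem_roots hP.ne_zero).1 (Multiset.mem_toFinset.1 (e.symm i).2)
  obtain ⟨A, hA⟩ := h.exists_eq_sum_pow hP ht hroot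
  exact ⟨A, fun i => (t i, 1), fun k hk => by simpa using hA k hk⟩

theorem exists_separable_X_pow_sub_C_mul [IsAlgClosed K] [CharZero K] {α N : ℕ} {μ : K}
    (hα : 0 < α) (hαN : α < N) (hμ : μ ≠ 0) :
    ∃ c : K, (X ^ N - C c * (X ^ α - C μ)).Separable := by
  classical
  obtain ⟨j, rfl⟩ : ∃ j, α = j + 1 := ⟨α - 1, by omega⟩
  obtain ⟨m, rfl⟩ : ∃ m, N = m + j + 1 := ⟨N - (j + 1), by omega⟩
  have hm : (m : K) ≠ 0 := by exact_mod_cast (by omega : m ≠ 0)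
  have hj : (j + 1 : K) ≠ 0 := by exact_mod_cast (by omega : j + 1 ≠ 0)
  -- A multiple root `z` forces `z ^ (j + 1) = (m + j + 1) μ / m` and
  -- `c = (m + j + 1) z ^ m / (j + 1)`, so all but finitely many `c` work.
  set S : Finset K := insert 0 ((nthRootsFinset (j + 1) ((m + j + 1) * μ / m)).image
    fun z => (m + j + 1) * z ^ m / (j + 1))
  obtain ⟨c, hc⟩ := Infinite.exists_notMem_finset S
  have hc0 : c ≠ 0 := fun h => hc (h ▸ mem_insert_self _ _)
  refine ⟨c, (separable_def _).2
    ((isCoprime_iff_aeval_ne_zero_of_isAlgClosed K K _ _).2 fun z => ?_)⟩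
  by_contra! hz
  obtain ⟨hPz, hP'z⟩ := hz
  simp only [aeval_sub, coe_aeval_eq_eval, eval_pow, eval_X, eval_mul, eval_C, eval_sub,
    derivative_sub, derivative_X_pow_succ, Nat.cast_add, map_add, map_natCast, map_one,
    derivative_mul, derivative_C, zero_mul, sub_zero, zero_add, eval_add, eval_natCast,
    eval_one] at hPz hP'z
  have hz0 : z ≠ 0 := by
    rintro rfl
    simp only [ne_eq, Nat.add_eq_zero_iff, one_ne_zero, and_false, not_false_eq_true,
      zero_pow] at hPz
    exact mul_ne_zero hc0 hμ (by linear_combination hPz)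
  have hzm : (m + j + 1) * z ^ m = c * (j + 1) := by
    refine mul_left_cancel₀ (pow_ne_zero j hz0) ?_
    linear_combination hP'z
  have hzα : z ^ (j + 1) = (m + j + 1) * μ / m := by
    rw [eq_div_iff hm]
    refine mul_left_cancel₀ hc0 ?_
    linear_combination -(m + j + 1) * hPz + z ^ (j + 1) * hzm
  refine hc (mem_insert_of_mem (mem_image.2 ⟨z, (mem_nthRootsFinset (by omega) _).2 hzα, ?_⟩))
  rw [div_eq_iff hj, hzm]

variable {a b : K} {s α : ℕ}

theorem annihilates_X_pow_sub_C (ha : a ≠ 0) (hsα : s < α) :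
    (X ^ α - C (b / a)).Annihilates (Pi.single 0 a + Pi.single α b) (s + α) := by
  intro k hk
  rw [natDegree_X_pow_sub_C] at hk
  rw [sum_coeff_mul_single_add_single]
  rcases Nat.eq_zero_or_pos k with rfl | hk0
  · simp [coeff_X_pow, coeff_C, ha, show α ≠ 0 by omega, (show α ≠ 0 by omega).symm]
  · rw [if_neg (by omega), if_pos (by omega)]
    simp [coeff_X_pow, coeff_C, show α - k ≠ α by omega, show α - k ≠ 0 by omega]

theorem natDegree_X_pow_sub_C_mul (hαs : α ≤ s) (c μ : K) :
    (X ^ (s + 1) - C c * (X ^ α - C μ)).natDegree = s + 1 := by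
  compute_degree!
  all_goals norm_num [show s + 1 ≠ α by omega, show α ≤ s + 1 by omega]

theorem monic_X_pow_sub_C_mul (hαs : α ≤ s) (c μ : K) :
    (X ^ (s + 1) - C c * (X ^ α - C μ)).Monic := by
  monicity!
  norm_num [show ¬s < α by omega, show α ≤ s + 1 by omega]

theorem annihilates_X_pow_sub_C_mul (ha : a ≠ 0) (hα : 0 < α) (hαs : α ≤ s) (c : K) :
    (X ^ (s + 1) - C c * (X ^ α - C (b / a))).Annihilates
      (Pi.single 0 a + Pi.single α b) (s + α) := by
  intro k hk
  rw [natDegree_X_pow_sub_C_mul hαs] at hk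
  rw [sum_coeff_mul_single_add_single]
  rcases Nat.eq_zero_or_pos k with rfl | hk0
  · simp [coeff_X_pow, coeff_C, mul_assoc, div_mul_cancel₀ _ ha, show α ≠ 0 by omega,
      (show α ≠ 0 by omega).symm, show α ≠ s + 1 by omega]
  · rw [if_neg (by omega), if_pos (by omega)]
    simp [coeff_X_pow, coeff_C, show α - k ≠ α by omega, show α - k ≠ 0 by omega,
      show α - k ≠ s + 1 by omega]

end Field

end Polynomial

open Polynomial in
theorem isLeast_hasPowerSumRep_single_add_single {K : Type*} [Field K] [IsAlgClosed K]
    [CharZero K] {a b : K} (ha : a ≠ 0) (hb : b ≠ 0) {s α : ℕ} (hs : 0 < s) (hα : 0 < α) :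
    IsLeast {r | HasPowerSumRep (s + α) r (Pi.single 0 a + Pi.single α b : ℕ → K)}
      (max α (s + 1)) := by
  refine ⟨?_, fun r hr => ?_⟩
  · rcases le_or_gt α s with hαs | hsα
    · rw [max_eq_right (by omega : α ≤ s + 1)]
      obtain ⟨c, hc⟩ :=
        exists_separable_X_pow_sub_C_mul hα (Nat.lt_succ_of_le hαs) (div_ne_zero hb ha)
      have := (annihilates_X_pow_sub_C_mul ha hα hαs c).hasPowerSumRep
        (monic_X_pow_sub_C_mul hαs c _) hc
      rwa [natDegree_X_pow_sub_C_mul hαs] at this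
    · rw [max_eq_left (by omega : s + 1 ≤ α)]
      have := (annihilates_X_pow_sub_C ha hsα).hasPowerSumRep (monic_X_pow_sub_C _ hα.ne')
        (separable_X_pow_sub_C _ (Nat.cast_ne_zero.2 hα.ne') (div_ne_zero hb ha))
      rwa [natDegree_X_pow_sub_C] at this
  · obtain ⟨P, hPm, hPsep, e, he, hdeg, hann⟩ := exists_monic_separable_annihilator (by omega) hr
    have := hann.le_natDegree hPm hb (by omega)
    have := hann.lt_natDegree_add hPsep.squarefree hb hα
    omega

theorem waring_rank_binomial_r_zero (a b : ℂ) (ha : a ≠ 0) (hb : b ≠ 0)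
    (s α : ℕ) (hs : 0 < s) (hα : 1 ≤ α) :
    (α ≤ s →
      waringRank (s + α) (C a * X (1 : Fin 2) ^ (s + α) + C b * X 0 ^ α * X 1 ^ s) = s + 1) ∧
    (s < α →
      waringRank (s + α) (C a * X (1 : Fin 2) ^ (s + α) + C b * X 0 ^ α * X 1 ^ s) = α) := by
  have hchoose : ((s + α).choose α : ℂ) ≠ 0 := Nat.cast_ne_zero.2 (Nat.choose_pos (by omega)).ne'
  have hrank : waringRank (s + α)
      (C a * X (1 : Fin 2) ^ (s + α) + C b * X 0 ^ α * X 1 ^ s) = max α (s + 1) := by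
    rw [binomial_eq_binaryForm, waringRank_binaryForm]
    exact (isLeast_hasPowerSumRep_single_add_single ha (div_ne_zero hb hchoose) hs hα).csInf_eq
  exact ⟨fun _ => by omega, fun _ => by omega⟩
end

section
/- The real Waring rank of x^3 + x y^2 is 2, while the real Waring rank of x^3 - x y^2 is 3; hence the real Waring rank of a binary binomial may depend on its coefficients. -/
open MvPolynomial

noncomputable def rlin (c : ℝ × ℝ) : MvPolynomial (Fin 2) ℝ :=
  C c.1 * X 0 + C c.2 * X 1

noncomputable def realWaringRank (d : ℕ) (F : MvPolynomial (Fin 2) ℝ) : ℕ :=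
  sInf {r | ∃ (a : Fin r → ℝ) (c : Fin r → ℝ × ℝ), F = ∑ i, C (a i) * rlin (c i) ^ d}

def Sset (F : MvPolynomial (Fin 2) ℝ) : Set ℕ :=
  {r | ∃ (a : Fin r → ℝ) (c : Fin r → ℝ × ℝ), F = ∑ i, C (a i) * rlin (c i) ^ 3}

lemma ev_eq {r : ℕ} {F : MvPolynomial (Fin 2) ℝ} {a : Fin r → ℝ} {c : Fin r → ℝ × ℝ}
    (h : F = ∑ i, C (a i) * rlin (c i) ^ 3) (x y : ℝ) :
    eval ![x, y] F = ∑ i, a i * ((c i).1 * x + (c i).2 * y) ^ 3 := by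
  subst h
  simp [rlin]

lemma mem_succ {F : MvPolynomial (Fin 2) ℝ} {r : ℕ} (h : r ∈ Sset F) : r + 1 ∈ Sset F := by
  obtain ⟨a, c, hF⟩ := h
  refine ⟨Fin.snoc a 0, Fin.snoc c (0, 0), ?_⟩
  rw [Fin.sum_univ_castSucc]
  simp [Fin.snoc, hF]

lemma mem_of_le {F : MvPolynomial (Fin 2) ℝ} {r m : ℕ} (h : r ∈ Sset F) (hle : r ≤ m) :
    m ∈ Sset F := by
  induction hle with
  | refl => exact h
  | step _ ih => exact mem_succ ih

lemma mem3 : 3 ∈ Sset (X (0 : Fin 2) ^ 3 - X 0 * X 1 ^ 2) := by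
  refine ⟨![4/3, -1/6, -1/6], ![(1, 0), (1, 1), (1, -1)], ?_⟩
  apply MvPolynomial.funext
  intro v
  simp [rlin, Fin.sum_univ_three]
  ring

lemma mem2 : 2 ∈ Sset (X (0 : Fin 2) ^ 3 + X 0 * X 1 ^ 2) := by
  have hs : Real.sqrt 3 ^ 2 = 3 := Real.sq_sqrt (by norm_num)
  refine ⟨![Real.sqrt 3 / 18, Real.sqrt 3 / 18], ![(Real.sqrt 3, 1), (Real.sqrt 3, -1)], ?_⟩
  apply MvPolynomial.funext
  intro v
  simp [rlin, Fin.sum_univ_two]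
  linear_combination (-((Real.sqrt 3 ^ 2 + 3) / 9 * v 0 ^ 3 + (1/3) * v 0 * v 1 ^ 2)) * hs

lemma not_mem1 : 1 ∉ Sset (X (0 : Fin 2) ^ 3 + X 0 * X 1 ^ 2) := by
  rintro ⟨a, c, hF⟩
  have E1 := ev_eq hF 1 0
  have E2 := ev_eq hF 0 1
  have E3 := ev_eq hF 1 1
  have E4 := ev_eq hF 1 (-1)
  simp [Fin.sum_univ_one] at E1 E2 E3 E4
  set A := a 0 with hA
  set p := (c 0).1 with hp
  set q := (c 0).2 with hq
  rcases E2 with h | h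
  · rw [h] at E1; norm_num at E1
  · rw [h] at E3; rw [h] at E4; nlinarith [E1, E3]

lemma not_mem2 : 2 ∉ Sset (X (0 : Fin 2) ^ 3 - X 0 * X 1 ^ 2) := by
  rintro ⟨a, c, hF⟩
  have E1 := ev_eq hF 1 0
  have E2 := ev_eq hF 0 1
  have E3 := ev_eq hF 1 1
  have E4 := ev_eq hF 1 (-1)
  simp only [Fin.sum_univ_two, Matrix.cons_val_zero, Matrix.cons_val_one] at E1 E2 E3 E4
  norm_num at E1 E2 E3 E4
  set a0 := a 0; set a1 := a 1
  set p1 := (c 0).1; set p2 := (c 0).2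
  set q1 := (c 1).1; set q2 := (c 1).2
  have hA : a0 * p1 ^ 3 + a1 * q1 ^ 3 = 1 := E1.symm
  have hD : a0 * p2 ^ 3 + a1 * q2 ^ 3 = 0 := E2.symm
  have hB : a0 * p1 ^ 2 * p2 + a1 * q1 ^ 2 * q2 = 0 := by
    linear_combination E4 / 6 - E3 / 6 + E2 / 3
  have hC : a0 * p1 * p2 ^ 2 + a1 * q1 * q2 ^ 2 = -(1/3) := by
    linear_combination -E3 / 6 - E4 / 6 + E1 / 3
  have h1 : a0 * a1 * p1 * q1 * (p1 * q2 - p2 * q1) ^ 2 = -(1/3) := by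
    linear_combination (a0 * p1 * p2 ^ 2 + a1 * q1 * q2 ^ 2) * hA + hC
      - (a0 * p1 ^ 2 * p2 + a1 * q1 ^ 2 * q2) * hB
  have h2 : a0 * a1 * p2 * q2 * (p1 * q2 - p2 * q1) ^ 2 = -(1/9) := by
    linear_combination (a0 * p1 ^ 2 * p2 + a1 * q1 ^ 2 * q2) * hD
      - (a0 * p1 * p2 ^ 2 + a1 * q1 * q2 ^ 2 - 1/3) * hC
  have h3 : a0 * a1 * (p1 * q2 + p2 * q1) * (p1 * q2 - p2 * q1) ^ 2 = 0 := by
    linear_combination (a0 * p2 ^ 3 + a1 * q2 ^ 3) * hA + hD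
      - (a0 * p1 * p2 ^ 2 + a1 * q1 * q2 ^ 2) * hB
  have h4 : (a0 * a1 * (p1 * q2 - p2 * q1) ^ 3) ^ 2 =
      (a0 * a1 * (p1 * q2 + p2 * q1) * (p1 * q2 - p2 * q1) ^ 2) ^ 2
      - 4 * (a0 * a1 * p1 * q1 * (p1 * q2 - p2 * q1) ^ 2)
          * (a0 * a1 * p2 * q2 * (p1 * q2 - p2 * q1) ^ 2) := by ring
  rw [h1, h2, h3] at h4
  nlinarith [sq_nonneg (a0 * a1 * (p1 * q2 - p2 * q1) ^ 3), h4]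

lemma rank_eq {F : MvPolynomial (Fin 2) ℝ} {n : ℕ} (hmem : n ∈ Sset F)
    (hnot : n - 1 ∉ Sset F) (hn : n ≠ 0) : realWaringRank 3 F = n := by
  have : realWaringRank 3 F = sInf (Sset F) := rfl
  rw [this]
  refine le_antisymm (Nat.sInf_le hmem) ?_
  by_contra hlt
  push_neg at hlt
  have hm := Nat.sInf_mem (⟨n, hmem⟩ : (Sset F).Nonempty)
  exact hnot (mem_of_le hm (by omega))


theorem real_rank_depends_on_coefficients :
    realWaringRank 3 (X (0 : Fin 2) ^ 3 + X 0 * X 1 ^ 2) = 2 ∧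
    realWaringRank 3 (X (0 : Fin 2) ^ 3 - X 0 * X 1 ^ 2) = 3 := by
  exact ⟨rank_eq mem2 not_mem1 (by norm_num), rank_eq mem3 not_mem2 (by norm_num)⟩
end

section
/- Let d ≥ 3 and F ∈ ℂ[x,y]_d with rk(F) ≤ ⌊(d+1)/2⌋, and suppose F is not a d-th power of a linear form. Then F has at least three pairwise distinct roots in ℙ^1, i.e., F is divisible by three pairwise non-proportional linear forms. -/
/-!
Over `ℂ` a binary form of degree `d` is a product of `d` linear forms, one for each root in `ℙ¹`
counted with multiplicity. If `F` has at most two distinct roots and is not a `d`-th power, then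
`F = u ℓ₁ᵃ ℓ₂ᵇ` with `ℓ₁, ℓ₂` independent and `a, b ≥ 1`. In coordinates with `ℓ₁ = x`, `ℓ₂ = y`,
suppose `xᵃ yᵇ = ∑_{i < r} αᵢ (Aᵢ x + Bᵢ y)^d` with `r ≤ a`. Since
`(d choose k) ∑ αᵢ Aᵢ^k Bᵢ^(d - k)` is the coefficient of `x^k y^(d - k)` in `xᵃ yᵇ`, these
moments vanish for `k ≠ a` but not for `k = a`. There is a form `Q` of degree `r` vanishing at
every point `(Aᵢ : Bᵢ)` whose coefficient of `x^m y^(r - m)` is `1` for some `m ≥ r - 1 ≥ r - b`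
and which has no monomial with a larger power of `x`. Expanding `Q` in
`0 = ∑ αᵢ Aᵢ^(a - m) Bᵢ^(m + b - r) Q(Aᵢ, Bᵢ)` leaves only the moment with `k = a`, a
contradiction. Hence `rk F > max a b ≥ ⌊(d + 1) / 2⌋`.
-/

open MvPolynomial

open Finset

section Apolarity

theorem Polynomial.eval_homogenize_eq_sum {R : Type*} [CommSemiring R] (q : Polynomial R)
    (n : ℕ) (x y : R) : MvPolynomial.eval ![x, y] (q.homogenize n) =
      ∑ j ∈ range (n + 1), q.coeff j * x ^ j * y ^ (n - j) := by
  simp [Polynomial.homogenize, Nat.sum_antidiagonal_eq_sum_range_succ_mk,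
    MvPolynomial.eval_monomial, Finsupp.prod_fintype, mul_assoc]

open Polynomial in
theorem Polynomial.coeff_C_mul_X_add_C_pow {R : Type*} [CommSemiring R] (a b : R) (n k : ℕ) :
    ((C a * X + C b) ^ n).coeff k = n.choose k * a ^ k * b ^ (n - k) := by
  have hterm : ∀ j, (C a * X) ^ j * C b ^ (n - j) * (n.choose j : R[X]) =
      C (n.choose j * a ^ j * b ^ (n - j)) * X ^ j := fun j => by
    rw [map_mul, map_mul, map_natCast, map_pow, map_pow]; ring
  simp_rw [add_pow, hterm, finsetSum_coeff, coeff_C_mul_X_pow, sum_ite_eq, mem_range]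
  split_ifs with hk
  · rfl
  · simp [Nat.choose_eq_zero_of_lt (by omega : n < k)]

open Polynomial in
theorem Polynomial.exists_monic_eval_homogenize_eq_zero {K ι : Type*} [Field K] [Fintype ι]
    (A B : ι → K) : ∃ q : K[X], q.Monic ∧ q.natDegree ≤ Fintype.card ι ∧
      Fintype.card ι ≤ q.natDegree + 1 ∧
      ∀ i, MvPolynomial.eval ![A i, B i] (q.homogenize (Fintype.card ι)) = 0 := by
  classical
  set r := Fintype.card ι
  set T := univ.filter fun i => B i ≠ 0
  -- The points `(A i : 0)` are handled by keeping `deg q < r`, which makes the homogenization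
  -- divisible by the second variable; when there are none, the truncated subtraction gives
  -- `deg q = r`.
  set q := (∏ i ∈ T, (X - C (A i / B i))) * X ^ (r - 1 - #T)
  have hprod : (∏ i ∈ T, (X - C (A i / B i))).Monic :=
    monic_prod_of_monic _ _ fun i _ => monic_X_sub_C _
  have hdeg : q.natDegree = #T + (r - 1 - #T) := by
    rw [hprod.natDegree_mul (monic_X_pow _), natDegree_prod_of_monic _ _ fun i _ => monic_X_sub_C _]
    simp
  have hT : #T ≤ r := card_le_univ T
  refine ⟨q, hprod.mul (monic_X_pow _), by omega, by omega, fun i => ?_⟩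
  by_cases hB : B i = 0
  · have hTr : #T < r := card_lt_univ_of_notMem (x := i) (by simp [T, hB])
    have hq : q.coeff r = 0 := coeff_eq_zero_of_natDegree_lt (by omega)
    rw [eval_homogenize_eq_sum, sum_range_succ, hq, zero_mul, zero_mul, add_zero]
    exact sum_eq_zero fun j hj => by
      rw [hB, zero_pow (Nat.sub_ne_zero_of_lt (mem_range.mp hj)), mul_zero]
  · rw [eval_homogenize (by omega) _ hB]
    simp only [Matrix.cons_val_zero, Matrix.cons_val_one, Matrix.cons_val_fin_one]
    rw [eval_mul, eval_prod, prod_eq_zero (i := i) (by simp [T, hB]) (by simp), zero_mul,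
      zero_mul]

open Polynomial in
theorem lt_card_of_sum_mul_pow_mul_pow {K ι : Type*} [Field K] [Fintype ι] (α A B : ι → K)
    {a b : ℕ} (hb : b ≠ 0)
    (hzero : ∀ x ≤ a + b, x ≠ a → ∑ i, α i * A i ^ x * B i ^ (a + b - x) = 0)
    (hne : ∑ i, α i * A i ^ a * B i ^ b ≠ 0) : a < Fintype.card ι := by
  by_contra! hr
  obtain ⟨q, hmonic, hle, hge, hq⟩ := exists_monic_eval_homogenize_eq_zero A B
  set r := Fintype.card ι
  set m := q.natDegree
  apply hne
  calc ∑ i, α i * A i ^ a * B i ^ b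
      = ∑ j ∈ range (r + 1),
          q.coeff j * ∑ i, α i * A i ^ (a - m + j) * B i ^ (a + b - (a - m + j)) := by
        rw [sum_eq_single m _ fun h => absurd (mem_range.mpr (by omega)) h,
          hmonic.coeff_natDegree, one_mul, show a - m + m = a by omega,
          show a + b - a = b by omega]
        intro j hj hjm
        rcases lt_or_gt_of_ne hjm with hjm | hjm
        · rw [hzero _ (by omega) (by omega), mul_zero]
        · rw [coeff_eq_zero_of_natDegree_lt hjm, zero_mul]
    _ = ∑ i, α i * A i ^ (a - m) * B i ^ (m + b - r) *
          MvPolynomial.eval ![A i, B i] (q.homogenize r) := by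
        simp_rw [eval_homogenize_eq_sum, mul_sum]
        rw [sum_comm]
        refine sum_congr rfl fun i _ => sum_congr rfl fun j hj => ?_
        rw [mem_range] at hj
        rw [show a + b - (a - m + j) = (m + b - r) + (r - j) by omega, pow_add, pow_add]
        ring
    _ = 0 := by simp [hq]

end Apolarity

section RootsOfUnity

theorem IsPrimitiveRoot.geom_sum_pow_eq_zero {R : Type*} [CommRing R] [IsDomain R] {ω : R}
    {n e : ℕ} (hω : IsPrimitiveRoot ω n) (he : ¬ n ∣ e) : ∑ j ∈ range n, (ω ^ e) ^ j = 0 := by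
  have hne : ω ^ e - 1 ≠ 0 := sub_ne_zero.mpr (mt (hω.pow_eq_one_iff_dvd e).mp he)
  have := geom_sum_mul (ω ^ e) n
  rw [← pow_mul, mul_comm e n, pow_mul, hω.pow_eq_one, one_pow, sub_self] at this
  exact (mul_eq_zero.mp this).resolve_right hne

theorem IsPrimitiveRoot.sum_pow_mul_add_mul_pow {R : Type*} [CommRing R] [IsDomain R] {ω : R}
    {a b : ℕ} (hω : IsPrimitiveRoot ω (a + b + 1)) (x y : R) :
    ∑ j ∈ range (a + b + 1), ω ^ (j * (a + 1)) * (x + ω ^ j * y) ^ (a + b) =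
      ((a + b + 1) * (a + b).choose a : ℕ) * (x ^ a * y ^ b) := by
  calc ∑ j ∈ range (a + b + 1), ω ^ (j * (a + 1)) * (x + ω ^ j * y) ^ (a + b)
      = ∑ k ∈ range (a + b + 1), (∑ j ∈ range (a + b + 1), (ω ^ (a + 1 + (a + b - k))) ^ j) *
          (x ^ k * y ^ (a + b - k) * (a + b).choose k) := by
        simp_rw [add_pow, mul_sum, sum_mul]
        rw [sum_comm]
        refine sum_congr rfl fun k _ => sum_congr rfl fun j _ => ?_
        ring
    _ = (∑ j ∈ range (a + b + 1), (ω ^ (a + b + 1)) ^ j) *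
          (x ^ a * y ^ b * (a + b).choose a) := by
        refine (sum_eq_single a (fun k hk hka => ?_) (by simp)).trans ?_
        · rw [hω.geom_sum_pow_eq_zero, zero_mul]
          rw [mem_range] at hk
          rintro ⟨c, hc⟩
          rcases c with _ | _ | c
          · omega
          · omega
          · have := Nat.mul_le_mul_left (a + b + 1) (show 2 ≤ c + 1 + 1 by omega)
            omega
        · rw [show a + 1 + (a + b - a) = a + b + 1 by omega, Nat.add_sub_cancel_left]
    _ = _ := by
        simp only [hω.pow_eq_one, one_pow, sum_const, card_range, nsmul_eq_mul]
        push_cast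
        ring

end RootsOfUnity

section LinearForms

lemma lin_add (c c' : ℂ × ℂ) : lin (c + c') = lin c + lin c' := by
  simp only [lin, Prod.fst_add, Prod.snd_add, map_add]; ring

lemma lin_smul (t : ℂ) (c : ℂ × ℂ) : lin (t • c) = C t * lin c := by
  simp only [lin, Prod.smul_fst, Prod.smul_snd, smul_eq_mul, map_mul]; ring

theorem exists_lin_pow_eq_C_mul_lin_pow {d : ℕ} (hd : d ≠ 0) (u : ℂ) (g : ℂ × ℂ) :
    ∃ c : ℂ × ℂ, C u * lin g ^ d = lin c ^ d := by
  obtain ⟨v, hv⟩ := IsAlgClosed.exists_pow_nat_eq u (Nat.pos_of_ne_zero hd)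
  exact ⟨v • g, by rw [lin_smul, mul_pow, ← map_pow, hv]⟩

theorem exists_C_mul_lin_pow_mul_lin_pow_eq_sum (u : ℂ) (g₁ g₂ : ℂ × ℂ) (a b : ℕ) :
    ∃ (α : Fin (a + b + 1) → ℂ) (c : Fin (a + b + 1) → ℂ × ℂ),
      C u * lin g₁ ^ a * lin g₂ ^ b = ∑ i, C (α i) * lin (c i) ^ (a + b) := by
  have hζ := Complex.isPrimitiveRoot_exp (a + b + 1) (by omega)
  set ζ := Complex.exp (2 * Real.pi * Complex.I / (a + b + 1 : ℕ))
  set N : ℂ := (((a + b + 1) * (a + b).choose a : ℕ) : ℂ)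
  have hN : N ≠ 0 :=
    Nat.cast_ne_zero.mpr (Nat.mul_ne_zero (by omega) (Nat.choose_pos (by omega)).ne')
  refine ⟨fun j => u / N * ζ ^ ((j : ℕ) * (a + 1)), fun j => g₁ + ζ ^ (j : ℕ) • g₂, ?_⟩
  have := (hζ.map_of_injective (C_injective (Fin 2) ℂ)).sum_pow_mul_add_mul_pow (lin g₁) (lin g₂)
  rw [Fin.sum_univ_eq_sum_range
    (fun j => C (u / N * ζ ^ (j * (a + 1))) * lin (g₁ + ζ ^ j • g₂) ^ (a + b))]
  simp_rw [lin_add, lin_smul, map_mul, map_pow, mul_assoc, ← mul_sum]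
  rw [this, ← map_natCast C, ← mul_assoc (C (u / N)), ← map_mul, div_mul_cancel₀ _ hN]

theorem exists_algHom_lin_eq_X_lin_eq_one {g₁ g₂ : ℂ × ℂ} (hg : g₁.1 * g₂.2 ≠ g₁.2 * g₂.1) :
    ∃ ψ : MvPolynomial (Fin 2) ℂ →ₐ[ℂ] Polynomial ℂ, ψ (lin g₁) = Polynomial.X ∧
      ψ (lin g₂) = 1 ∧
      ∀ c, ∃ p q : ℂ, ψ (lin c) = Polynomial.C p * Polynomial.X + Polynomial.C q := by
  set Δ := g₁.1 * g₂.2 - g₁.2 * g₂.1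
  have hΔ : Δ ≠ 0 := sub_ne_zero.mpr hg
  set ψ : MvPolynomial (Fin 2) ℂ →ₐ[ℂ] Polynomial ℂ :=
    aeval ![Polynomial.C (g₂.2 / Δ) * Polynomial.X - Polynomial.C (g₁.2 / Δ),
      Polynomial.C (g₁.1 / Δ) - Polynomial.C (g₂.1 / Δ) * Polynomial.X]
  have hψ : ∀ c : ℂ × ℂ, ψ (lin c) = Polynomial.C ((c.1 * g₂.2 - c.2 * g₂.1) / Δ) *
      Polynomial.X + Polynomial.C ((c.2 * g₁.1 - c.1 * g₁.2) / Δ) := fun c => by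
    apply Polynomial.funext
    intro x
    simp [ψ, lin]
    ring
  have h₁ : (g₁.1 * g₂.2 - g₁.2 * g₂.1) / Δ = 1 := div_self hΔ
  have h₂ : (g₂.2 * g₁.1 - g₂.1 * g₁.2) / Δ = 1 := by rw [← h₁]; ring
  refine ⟨ψ, ?_, ?_, fun c => ⟨_, _, hψ c⟩⟩
  · rw [hψ, h₁, show g₁.2 * g₁.1 - g₁.1 * g₁.2 = 0 by ring]
    simp
  · rw [hψ, h₂, show g₂.1 * g₂.2 - g₂.2 * g₂.1 = 0 by ring]
    simp

theorem lt_card_of_C_mul_lin_pow_mul_lin_pow_eq_sum {ι : Type*} [Fintype ι] {u : ℂ} (hu : u ≠ 0)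
    {g₁ g₂ : ℂ × ℂ} (hg : g₁.1 * g₂.2 ≠ g₁.2 * g₂.1) {a b : ℕ} (hb : b ≠ 0) (α : ι → ℂ)
    (c : ι → ℂ × ℂ) (h : C u * lin g₁ ^ a * lin g₂ ^ b = ∑ i, C (α i) * lin (c i) ^ (a + b)) :
    a < Fintype.card ι := by
  obtain ⟨ψ, hψ₁, hψ₂, hψ⟩ := exists_algHom_lin_eq_X_lin_eq_one hg
  choose A B hAB using fun i => hψ (c i)
  have hψh : Polynomial.C u * Polynomial.X ^ a = ∑ i, Polynomial.C (α i) *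
      (Polynomial.C (A i) * Polynomial.X + Polynomial.C (B i)) ^ (a + b) := by
    simpa [hψ₁, hψ₂, hAB] using congrArg ψ h
  have hcoeff : ∀ x, (if x = a then u else 0) =
      (a + b).choose x * ∑ i, α i * A i ^ x * B i ^ (a + b - x) := fun x => by
    simpa [Polynomial.coeff_C_mul_X_pow, Polynomial.finsetSum_coeff,
      Polynomial.coeff_C_mul_X_add_C_pow, mul_sum, mul_assoc, mul_left_comm]
      using congrArg (Polynomial.coeff · x) hψh
  refine lt_card_of_sum_mul_pow_mul_pow α A B hb (fun x hx hxa => ?_) fun h0 => ?_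
  · have := hcoeff x
    rw [if_neg hxa, eq_comm, mul_eq_zero] at this
    exact this.resolve_left (Nat.cast_ne_zero.mpr (Nat.choose_pos hx).ne')
  · have := hcoeff a
    rw [if_pos rfl, Nat.add_sub_cancel_left, h0, mul_zero] at this
    exact hu this

theorem lt_waringRank {u : ℂ} (hu : u ≠ 0) {g₁ g₂ : ℂ × ℂ} (hg : g₁.1 * g₂.2 ≠ g₁.2 * g₂.1)
    {a b : ℕ} (hb : b ≠ 0) : a < waringRank (a + b) (C u * lin g₁ ^ a * lin g₂ ^ b) := by
  -- `sInf ∅ = 0`, so the infimum is a decomposition only once some decomposition exists.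
  obtain ⟨α, c, h⟩ := Nat.sInf_mem
    (⟨_, exists_C_mul_lin_pow_mul_lin_pow_eq_sum u g₁ g₂ a b⟩ : Set.Nonempty
      {r | ∃ (α : Fin r → ℂ) (c : Fin r → ℂ × ℂ),
        C u * lin g₁ ^ a * lin g₂ ^ b = ∑ i, C (α i) * lin (c i) ^ (a + b)})
  simpa [waringRank] using lt_card_of_C_mul_lin_pow_mul_lin_pow_eq_sum hu hg hb α c h

theorem half_lt_waringRank {u : ℂ} (hu : u ≠ 0) {g₁ g₂ : ℂ × ℂ}
    (hg : g₁.1 * g₂.2 ≠ g₁.2 * g₂.1) {a b : ℕ} (ha : a ≠ 0) (hb : b ≠ 0) :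
    (a + b + 1) / 2 < waringRank (a + b) (C u * lin g₁ ^ a * lin g₂ ^ b) := by
  have h₁ := lt_waringRank hu hg (a := a) hb
  have h₂ := lt_waringRank hu (g₁ := g₂) (g₂ := g₁) (fun h => hg (by linear_combination -h))
    (a := b) ha
  rw [mul_right_comm, add_comm b] at h₂
  omega

end LinearForms

section Factorization

/-- Coefficients of the linear form vanishing at a point of `ℙ¹ = ℂ ∪ {∞}`, where `none` is the
point `∞ = (1 : 0)` and `some r` is `(r : 1)`. -/
def rootCoeffs : Option ℂ → ℂ × ℂ
  | none => (0, 1)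
  | some r => (1, -r)

lemma rootCoeffs_cross_ne_of_ne {z w : Option ℂ} (h : z ≠ w) :
    (rootCoeffs z).1 * (rootCoeffs w).2 ≠ (rootCoeffs z).2 * (rootCoeffs w).1 := by
  cases z <;> cases w <;> simp_all [rootCoeffs, eq_comm]

lemma MvPolynomial.IsHomogeneous.natDegree_aeval_X_one_le {R : Type*} [CommSemiring R] {d : ℕ}
    {F : MvPolynomial (Fin 2) R} (hF : F.IsHomogeneous d) :
    (MvPolynomial.aeval (![Polynomial.X, 1] : Fin 2 → Polynomial R) F).natDegree ≤ d := by
  rw [F.as_sum, map_sum]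
  refine Polynomial.natDegree_sum_le_of_forall_le _ _ fun m hm => ?_
  have hm : m 0 + m 1 = d := by
    simpa [Finsupp.weight_apply, Finsupp.sum_fintype, Fin.sum_univ_two]
      using hF (mem_support_iff.mp hm)
  simp only [aeval_monomial, Finsupp.prod_fintype _ _ (fun _ => pow_zero _), Fin.prod_univ_two]
  simpa using (Polynomial.natDegree_C_mul_X_pow_le _ _).trans (by omega)

lemma homogenize_prod_X_sub_C (s : Multiset ℂ) :
    ((s.map fun r => Polynomial.X - Polynomial.C r).prod).homogenize (Multiset.card s) =
      (s.map fun r => lin (rootCoeffs (some r))).prod := by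
  induction s using Multiset.induction_on with
  | empty => simp
  | cons r s ih =>
    rw [Multiset.map_cons, Multiset.prod_cons, Multiset.card_cons, add_comm,
      Polynomial.homogenize_mul _ _ (Polynomial.natDegree_X_sub_C_le r)
        (Polynomial.natDegree_multiset_prod_X_sub_C_eq_card s).le, ih]
    simp [lin, rootCoeffs, sub_eq_add_neg]

theorem MvPolynomial.IsHomogeneous.exists_eq_C_mul_prod_lin {d : ℕ}
    {F : MvPolynomial (Fin 2) ℂ} (hF : F.IsHomogeneous d) : ∃ (u : ℂ) (m : Multiset (Option ℂ)),
      Multiset.card m = d ∧ F = C u * (m.map fun z => lin (rootCoeffs z)).prod := by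
  set p := MvPolynomial.aeval (![Polynomial.X, 1] : Fin 2 → Polynomial ℂ) F
  have hk : Multiset.card p.roots ≤ d :=
    (Polynomial.card_roots' p).trans hF.natDegree_aeval_X_one_le
  refine ⟨p.leadingCoeff, p.roots.map some + Multiset.replicate (d - Multiset.card p.roots) none,
    by simp [hk], ?_⟩
  calc F = p.homogenize d := (Polynomial.homogenize_eq_of_isHomogeneous hF rfl).symm
    _ = (Polynomial.C p.leadingCoeff * (p.roots.map (Polynomial.X - Polynomial.C ·)).prod * 1
          ).homogenize (Multiset.card p.roots + (d - Multiset.card p.roots)) := by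
      rw [Nat.add_sub_cancel' hk, mul_one, ← (IsAlgClosed.splits p).eq_prod_roots]
    _ = _ := by
      rw [mul_assoc, Polynomial.homogenize_C_mul, Polynomial.homogenize_mul _ _
        (Polynomial.natDegree_multiset_prod_X_sub_C_eq_card _).le (by simp),
        homogenize_prod_X_sub_C]
      simp [lin, rootCoeffs]

end Factorization

theorem low_rank_three_distinct_roots (d : ℕ) (hd : 3 ≤ d) (F : MvPolynomial (Fin 2) ℂ)
    (hF : F.IsHomogeneous d) (hrk : waringRank d F ≤ (d + 1) / 2)
    (hpow : ¬ ∃ c : ℂ × ℂ, F = lin c ^ d) :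
    ∃ l₁ l₂ l₃ : ℂ × ℂ,
      (l₁.1 * l₂.2 ≠ l₁.2 * l₂.1) ∧ (l₂.1 * l₃.2 ≠ l₂.2 * l₃.1) ∧
      (l₁.1 * l₃.2 ≠ l₁.2 * l₃.1) ∧
      lin l₁ ∣ F ∧ lin l₂ ∣ F ∧ lin l₃ ∣ F := by
  classical
  have hF0 : F ≠ 0 := fun h => hpow ⟨0, by simp [h, lin, zero_pow (by omega : d ≠ 0)]⟩
  obtain ⟨u, m, rfl, rfl⟩ := hF.exists_eq_C_mul_prod_lin
  have hu : u ≠ 0 := by rintro rfl; simp at hF0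
  rcases lt_or_ge 2 m.toFinset.card with h3 | h2
  · have hdvd : ∀ z ∈ m.toFinset,
        lin (rootCoeffs z) ∣ C u * (m.map fun z => lin (rootCoeffs z)).prod := fun z hz =>
      (Multiset.dvd_prod (Multiset.mem_map_of_mem _ (Multiset.mem_toFinset.mp hz))).mul_left _
    obtain ⟨z₁, z₂, z₃, h₁, h₂, h₃, h12, h13, h23⟩ := two_lt_card_iff.mp h3
    exact ⟨_, _, _, rootCoeffs_cross_ne_of_ne h12, rootCoeffs_cross_ne_of_ne h23,
      rootCoeffs_cross_ne_of_ne h13, hdvd _ h₁, hdvd _ h₂, hdvd _ h₃⟩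
  exfalso
  have hcard := Multiset.toFinset_sum_count_eq m
  have hcount : ∀ z ∈ m.toFinset, m.count z ≠ 0 := fun z hz =>
    Multiset.count_ne_zero.mpr (Multiset.mem_toFinset.mp hz)
  rw [prod_multiset_map_count] at hrk hpow
  interval_cases hc : m.toFinset.card
  · simp_all
  · obtain ⟨z, hz⟩ := card_eq_one.mp hc
    rw [hz, sum_singleton] at hcard
    rw [hz, prod_singleton, hcard] at hpow
    obtain ⟨c, hc⟩ := exists_lin_pow_eq_C_mul_lin_pow (d := Multiset.card m) (by omega) u _
    exact hpow ⟨c, hc⟩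
  · obtain ⟨z₁, z₂, hne, hz⟩ := card_eq_two.mp hc
    rw [hz, sum_pair hne] at hcard
    rw [hz, prod_pair hne, ← hcard, ← mul_assoc] at hrk
    have := half_lt_waringRank hu (rootCoeffs_cross_ne_of_ne hne) (hcount z₁ (by simp [hz]))
      (hcount z₂ (by simp [hz]))
    omega
end

section
/- For d = 4, the forms of degree 4 with Waring rank two and divisible by x y (x+y) are, up to scalar, exactly x y (x+y)(x-y), x y (x+y)(x+2y), and x y (x+y)(x + y/2). -/
open MvPolynomial

lemma core_lemma (A α β : ℂ) (hA : A ≠ 0) (hne : α ≠ β)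
    (h4 : α^4 = β^4) (h3 : (1-α)^4 = (1-β)^4) :
    ∃ c : ℂ, c ≠ 0 ∧
      ((∀ u w : ℂ, A*(u+α*w)^4 - A*(u+β*w)^4 = c * (u*w*(u+w)*(u-w))) ∨
       (∀ u w : ℂ, A*(u+α*w)^4 - A*(u+β*w)^4 = c * (u*w*(u+w)*(u+2*w))) ∨
       (∀ u w : ℂ, A*(u+α*w)^4 - A*(u+β*w)^4 = c * (u*w*(u+w)*(u+(1/2)*w)))) := by
  have hd : α - β ≠ 0 := sub_ne_zero.mpr hne
  have hd' : β - α ≠ 0 := sub_ne_zero.mpr (Ne.symm hne)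
  have f4 : (α - β) * ((α+β)*(α^2+β^2)) = 0 := by linear_combination h4
  have f3 : (β - α) * ((2-α-β)*((1-α)^2+(1-β)^2)) = 0 := by linear_combination h3
  have f3' : (2-α-β)*((1-α)^2+(1-β)^2) = 0 :=
    (mul_eq_zero.mp f3).resolve_left hd'
  rcases mul_eq_zero.mp ((mul_eq_zero.mp f4).resolve_left hd) with hs | hq
  · -- α + β = 0
    have hβ : β = -α := by linear_combination hs
    subst hβ
    have hα0 : α ≠ 0 := by
      intro h; exact hne (by rw [h]; ring)
    rcases mul_eq_zero.mp f3' with h2 | h2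
    · exfalso; have : (0:ℂ) = 2 := by linear_combination -h2
      norm_num at this
    have hα : α^2 = -1 := by linear_combination h2/2
    refine ⟨8*α*A, by simp [hα0, hA], Or.inl fun u w => ?_⟩
    linear_combination (8*A*α*u*w^3) * hα
  · -- α² + β² = 0
    rcases mul_eq_zero.mp f3' with h2 | h2
    · -- α + β = 2
      have hs2 : α + β = 2 := by linear_combination -h2
      have hp : α*β = 2 := by
        linear_combination (-(1/2:ℂ))*hq + ((α+β+2)/2)*hs2
      refine ⟨4*A*(α-β), by simp [hA, hd], Or.inr (Or.inl fun u w => ?_)⟩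
      linear_combination ((-8)*A*w^4 + (-8)*A*u*w^3 + (-4)*A*β*w^4 + (-8)*A*β*u*w^3 + (-6)*A*β*u^2*w^2 + (-2)*A*β^2*w^4 + (-4)*A*β^2*u*w^3 + (-1)*A*β^3*w^4 + 4*A*α*w^4 + 8*A*α*u*w^3 + 6*A*α*u^2*w^2 + 4*A*α*β*w^4 + 4*A*α*β*u*w^3 + A*α*β^2*w^4 + 2*A*α^2*w^4 + 4*A*α^2*u*w^3 + (-1)*A*α^2*β*w^4 + A*α^3*w^4) * hs2 + (8*A*w^4 + 8*A*u*w^3 + (-8)*A*α*w^4 + (-8)*A*α*u*w^3) * hp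
    · -- α + β = 1
      have hs1 : α + β = 1 := by linear_combination (-(1/2:ℂ))*h2 + (1/2:ℂ)*hq
      have hp : α*β = 1/2 := by
        linear_combination (-(1/2:ℂ))*hq + ((α+β+1)/2)*hs1
      refine ⟨4*A*(α-β), by simp [hA, hd], Or.inr (Or.inr fun u w => ?_)⟩
      linear_combination ((-1)*A*w^4 + (-2)*A*u*w^3 + (-1)*A*β*w^4 + (-4)*A*β*u*w^3 + (-6)*A*β*u^2*w^2 + (-1)*A*β^2*w^4 + (-4)*A*β^2*u*w^3 + (-1)*A*β^3*w^4 + A*α*w^4 + 4*A*α*u*w^3 + 6*A*α*u^2*w^2 + 2*A*α*β*w^4 + 4*A*α*β*u*w^3 + A*α*β^2*w^4 + A*α^2*w^4 + 4*A*α^2*u*w^3 + (-1)*A*α^2*β*w^4 + A*α^3*w^4) * hs1 + (2*A*w^4 + 4*A*u*w^3 + (-4)*A*α*w^4 + (-8)*A*α*u*w^3) * hp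


lemma two_le_of_mem (F : MvPolynomial (Fin 2) ℂ)
    (h10 : eval ![(1:ℂ),0] F = 0) (h01 : eval ![(0:ℂ),1] F = 0)
    (h21 : eval ![(2:ℂ),1] F ≠ 0) (b : ℕ)
    (hb : ∃ (a : Fin b → ℂ) (cc : Fin b → ℂ × ℂ), F = ∑ i, C (a i) * lin (cc i) ^ 4) :
    2 ≤ b := by
  by_contra h
  push_neg at h
  interval_cases b
  · obtain ⟨a, cc, hrep⟩ := hb
    apply h21
    rw [hrep]
    simp
  · obtain ⟨a, cc, hrep⟩ := hb
    rw [Fin.sum_univ_one] at hrep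
    have e10 := congrArg (eval ![(1:ℂ),0]) hrep
    have e01 := congrArg (eval ![(0:ℂ),1]) hrep
    have e21 := congrArg (eval ![(2:ℂ),1]) hrep
    rw [h10] at e10; rw [h01] at e01
    simp [lin] at e10 e01 e21
    apply h21
    rw [e21]
    rcases e10 with h | hp
    · rw [h]; ring
    rcases e01 with h | hq
    · rw [h]; ring
    rw [hp, hq]; ring

theorem rank_two_multiples_deg_four (F : MvPolynomial (Fin 2) ℂ) (hF : F.IsHomogeneous 4) :
    (waringRank 4 F = 2 ∧ X (0 : Fin 2) * X 1 * (X 0 + X 1) ∣ F) ↔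
    ∃ c : ℂ, c ≠ 0 ∧
      (F = C c * (X (0 : Fin 2) * X 1 * (X 0 + X 1) * (X 0 - X 1)) ∨
       F = C c * (X (0 : Fin 2) * X 1 * (X 0 + X 1) * (X 0 + 2 * X 1)) ∨
       F = C c * (X (0 : Fin 2) * X 1 * (X 0 + X 1) * (X 0 + C (1/2 : ℂ) * X 1))) := by
  set S := {r | ∃ (a : Fin r → ℂ) (c : Fin r → ℂ × ℂ), F = ∑ i, C (a i) * lin (c i) ^ 4}
    with hS
  have hrankS : waringRank 4 F = sInf S := rfl
  constructor
  · rintro ⟨hrank, G, hG⟩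
    rw [hrankS] at hrank
    have hSne : S.Nonempty := by
      by_contra h
      rw [Set.not_nonempty_iff_eq_empty] at h
      rw [h, Nat.sInf_empty] at hrank
      omega
    have h2S : 2 ∈ S := hrank ▸ Nat.sInf_mem hSne
    have hnot1 : ∀ (b : ℂ) (pq : ℂ × ℂ), F ≠ C b * lin pq ^ 4 := by
      intro b pq h
      have h1 : 1 ∈ S := ⟨![b], ![pq], by simpa using h⟩
      have := Nat.sInf_le h1
      omega
    obtain ⟨a, cc, hrep⟩ := h2S
    rw [Fin.sum_univ_two] at hrep
    set a0 := a 0 with ha0d; set a1 := a 1 with ha1d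
    set p0 := (cc 0).1 with hp0d; set q0 := (cc 0).2 with hq0d
    set p1 := (cc 1).1 with hp1d; set q1 := (cc 1).2 with hq1d
    have hlin0 : lin (cc 0) = C p0 * X 0 + C q0 * X 1 := rfl
    have hlin1 : lin (cc 1) = C p1 * X 0 + C q1 * X 1 := rfl
    rw [hlin0, hlin1] at hrep
    -- evaluation identity
    have key : ∀ v : Fin 2 → ℂ,
        a0*(p0 * v 0 + q0 * v 1)^4 + a1*(p1 * v 0 + q1 * v 1)^4 =
        (v 0 * v 1 * (v 0 + v 1)) * eval v G := by
      intro v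
      have h1 := congrArg (eval v) hrep
      have h2 := congrArg (eval v) hG
      simp at h1 h2
      rw [← h1, h2]
    have E1 : a0*p0^4 + a1*p1^4 = 0 := by
      have := key ![1, 0]; simpa using this
    have E2 : a0*q0^4 + a1*q1^4 = 0 := by
      have := key ![0, 1]; simpa using this
    have E3 : a0*(p0-q0)^4 + a1*(p1-q1)^4 = 0 := by
      have := key ![1, -1]; simp at this; linear_combination this
    -- nondegeneracy
    have ha0 : a0 ≠ 0 := by
      intro h
      refine hnot1 a1 (cc 1) ?_
      rw [hrep, hlin1, h, map_zero]; ring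
    have ha1 : a1 ≠ 0 := by
      intro h
      refine hnot1 a0 (cc 0) ?_
      rw [hrep, hlin0, h, map_zero]; ring
    have hdet : p0*q1 - q0*p1 ≠ 0 := by
      intro h
      by_cases hp0 : p0 = 0
      · by_cases hq0 : q0 = 0
        · refine hnot1 a1 (cc 1) ?_
          rw [hrep, hlin1, hp0, hq0, map_zero]; ring
        · -- q0 ≠ 0, p0 = 0 : p0*q1 = q0*p1 → p1 = 0
          have hp1 : p1 = 0 := by
            have h0 : q0 * p1 = 0 := by rw [hp0] at h; linear_combination -h
            exact (mul_eq_zero.mp h0).resolve_left hq0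
          set l := q1 / q0 with hld
          have hl2 : q1 = l * q0 := by rw [hld]; field_simp
          refine hnot1 (a0 + a1 * l^4) (cc 0) ?_
          rw [hrep, hlin0]
          apply MvPolynomial.funext
          intro v
          simp only [eval_add, eval_mul, eval_pow, eval_C, eval_X]
          rw [hp0, hp1, hl2]
          ring
      · have hq1p : q1 * p0 = q0 * p1 := by linear_combination h
        set l := p1 / p0 with hld
        have hl1 : p1 = l * p0 := by rw [hld]; field_simp
        have hl2 : q1 = l * q0 := by
          rw [hld, div_mul_eq_mul_div, eq_div_iff hp0]; linear_combination hq1p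
        refine hnot1 (a0 + a1 * l^4) (cc 0) ?_
        rw [hrep, hlin0]
        apply MvPolynomial.funext
        intro v
        simp only [eval_add, eval_mul, eval_pow, eval_C, eval_X]
        rw [hl1, hl2]
        ring
    have hp0 : p0 ≠ 0 := by
      intro h
      have : a1 * p1^4 = 0 := by rw [h] at E1; linear_combination E1
      have hp1 : p1 = 0 := by
        rcases mul_eq_zero.mp this with h' | h'
        · exact absurd h' ha1
        · exact pow_eq_zero_iff (by norm_num) |>.mp h'
      exact hdet (by rw [h, hp1]; ring)
    have hp1 : p1 ≠ 0 := by
      intro h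
      have : a0 * p0^4 = 0 := by rw [h] at E1; linear_combination E1
      have hp0' : p0 = 0 := by
        rcases mul_eq_zero.mp this with h' | h'
        · exact absurd h' ha0
        · exact pow_eq_zero_iff (by norm_num) |>.mp h'
      exact hp0 hp0'
    -- normalize
    set α := q0 / p0 with hα
    set β := q1 / p1 with hβ
    have hq0 : q0 = α * p0 := by rw [hα]; field_simp
    have hq1 : q1 = β * p1 := by rw [hβ]; field_simp
    have hA : a0 * p0^4 ≠ 0 := mul_ne_zero ha0 (pow_ne_zero _ hp0)
    have h1 : a1 * p1^4 = -(a0 * p0^4) := by linear_combination E1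
    have hne : α ≠ β := by
      intro h
      exact hdet (by rw [hq0, hq1, h]; ring)
    have h4 : α^4 = β^4 := by
      have h := E2
      rw [hq0, hq1] at h
      apply mul_left_cancel₀ hA
      linear_combination h - β^4 * h1
    have h3 : (1-α)^4 = (1-β)^4 := by
      have h := E3
      rw [hq0, hq1] at h
      apply mul_left_cancel₀ hA
      linear_combination h - (1-β)^4 * h1
    obtain ⟨c, hc, hcase⟩ := core_lemma (a0*p0^4) α β hA hne h4 h3
    refine ⟨c, hc, ?_⟩
    rcases hcase with hid | hid | hid
    · left
      rw [hrep]
      apply MvPolynomial.funext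
      intro v
      have := hid (v 0) (v 1)
      simp only [eval_add, eval_mul, eval_sub, eval_pow, eval_C, eval_X]
      rw [hq0, hq1]
      linear_combination this + (v 0 + β * v 1)^4 * h1
    · right; left
      rw [hrep]
      apply MvPolynomial.funext
      intro v
      have := hid (v 0) (v 1)
      simp only [eval_add, eval_mul, eval_sub, eval_pow, eval_C, eval_X, eval_ofNat]
      rw [hq0, hq1]
      linear_combination this + (v 0 + β * v 1)^4 * h1
    · right; right
      rw [hrep]
      apply MvPolynomial.funext
      intro v
      have := hid (v 0) (v 1)
      simp only [eval_add, eval_mul, eval_sub, eval_pow, eval_C, eval_X]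
      rw [hq0, hq1]
      linear_combination this + (v 0 + β * v 1)^4 * h1
  · rintro ⟨c, hc, hcase⟩
    have hIsq := Complex.I_sq
    rcases hcase with hFe | hFe | hFe
    · have h2mem : 2 ∈ S := by
        refine ⟨![-c*Complex.I/8, c*Complex.I/8], ![(1, Complex.I), (1, -Complex.I)], ?_⟩
        rw [hFe]
        apply MvPolynomial.funext
        intro v
        simp [Fin.sum_univ_two, lin]
        linear_combination (-(c*(v 0)*(v 1)^3) + c*(v 0)^3*(v 1) + c*Complex.I^2*(v 0)*(v 1)^3) * hIsq
      have h21 : eval ![(2:ℂ),1] F ≠ 0 := by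
        rw [hFe]; simp [hc]; norm_num
      refine ⟨?_, ⟨C c * (X 0 - X 1), by rw [hFe]; ring⟩⟩
      rw [hrankS]
      exact le_antisymm (Nat.sInf_le h2mem)
        (le_csInf ⟨2, h2mem⟩ fun b hb => two_le_of_mem F
          (by rw [hFe]; simp) (by rw [hFe]; simp) h21 b hb)
    · have h2mem : 2 ∈ S := by
        refine ⟨![-c*Complex.I/8, c*Complex.I/8], ![(1, 1+Complex.I), (1, 1-Complex.I)], ?_⟩
        rw [hFe]
        apply MvPolynomial.funext
        intro v
        simp [Fin.sum_univ_two, lin]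
        linear_combination (2*c*(v 0)*(v 1)^3 + 3*c*(v 0)^2*(v 1)^2 + c*(v 0)^3*(v 1) + c*Complex.I^2*(v 1)^4 + c*Complex.I^2*(v 0)*(v 1)^3) * hIsq
      have h21 : eval ![(2:ℂ),1] F ≠ 0 := by
        rw [hFe]; simp [hc]; norm_num
      refine ⟨?_, ⟨C c * (X 0 + 2 * X 1), by rw [hFe]; ring⟩⟩
      rw [hrankS]
      exact le_antisymm (Nat.sInf_le h2mem)
        (le_csInf ⟨2, h2mem⟩ fun b hb => two_le_of_mem F
          (by rw [hFe]; simp) (by rw [hFe]; simp) h21 b hb)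
    · have h2mem : 2 ∈ S := by
        refine ⟨![-c*Complex.I/4, c*Complex.I/4], ![(1, (1+Complex.I)/2), (1, (1-Complex.I)/2)], ?_⟩
        rw [hFe]
        apply MvPolynomial.funext
        intro v
        simp [Fin.sum_univ_two, lin]
        linear_combination ((1/2)*c*(v 0)*(v 1)^3 + (3/2)*c*(v 0)^2*(v 1)^2 + c*(v 0)^3*(v 1) + (1/8)*c*Complex.I^2*(v 1)^4 + (1/4)*c*Complex.I^2*(v 0)*(v 1)^3) * hIsq
      have h21 : eval ![(2:ℂ),1] F ≠ 0 := by
        rw [hFe]; simp [hc]; norm_num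
      refine ⟨?_, ⟨C c * (X 0 + C (1/2 : ℂ) * X 1), by rw [hFe]; ring⟩⟩
      rw [hrankS]
      exact le_antisymm (Nat.sInf_le h2mem)
        (le_csInf ⟨2, h2mem⟩ fun b hb => two_le_of_mem F
          (by rw [hFe]; simp) (by rw [hFe]; simp) h21 b hb)
end
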